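/- arXiv:2301.04996 — 5 statements merged into one kernel-verified Lean document; each statement's English description precedes it below -/
import Mathlib

section
/- Let f : {0,1}^m → ℝ be supermodular and let f̌ : ℝ^m → ℝ be the unique affine function with f̌(ρ_j) = f(ρ_j) for all 0 ≤ j ≤ m (where ρ_j has j leading ones). Then f̌(λ) ≥ f(λ) for every λ ∈ {0,1}^m. -/
/-- if `f : {0,1}^m → ℝ` is supermodular and `f̌` is the affine
function agreeing with `f` at the vertices `ρ_0, …, ρ_m` (with `j` leading ones),
then `f̌` dominates `f` on all of `{0,1}^m`. -/
theorem affine_interpolant_dominates_supermodular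
    (m : ℕ) (f : (Fin m → ℝ) → ℝ)
    (hsuper : ∀ x y : Fin m → ℝ,
      (∀ i, x i = 0 ∨ x i = 1) → (∀ i, y i = 0 ∨ y i = 1) →
      f x + f y ≤ f (fun i => max (x i) (y i)) + f (fun i => min (x i) (y i)))
    (ρ : ℕ → Fin m → ℝ)
    (hρ : ∀ j i, ρ j i = if (i : ℕ) + 1 ≤ j then 1 else 0)
    (α : ℕ → ℝ)
    (hα0 : α 0 = f (ρ 0))
    (hα : ∀ i, 1 ≤ i → i ≤ m → α i = f (ρ i) - f (ρ (i - 1)))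
    (fc : (Fin m → ℝ) → ℝ)
    (hfc : ∀ x, fc x = α 0 + ∑ i : Fin m, α ((i : ℕ) + 1) * x i) :
    ∀ lam : Fin m → ℝ, (∀ i, lam i = 0 ∨ lam i = 1) → f lam ≤ fc lam := by
  intro lam hl
  set g : ℕ → ℝ := fun j => f (fun k => min (lam k) (ρ j k)) with hg
  have hgm : g m = f lam := by
    simp only [hg]
    congr 1
    funext k
    rw [hρ, if_pos (by omega)]
    rcases hl k with h | h <;> simp [h]
  have hg0 : g 0 = f (ρ 0) := by
    simp only [hg]
    congr 1
    funext k
    rw [hρ, if_neg (by omega)]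
    rcases hl k with h | h <;> simp [h]
  have step : ∀ i : Fin m, g ((i : ℕ) + 1) - g (i : ℕ) ≤ α ((i : ℕ) + 1) * lam i := by
    intro i
    rcases hl i with h0 | h1
    · have heq : g ((i : ℕ) + 1) = g (i : ℕ) := by
        simp only [hg]
        congr 1
        funext k
        rw [hρ, hρ]
        rcases Nat.lt_trichotomy (k : ℕ) (i : ℕ) with hk | hk | hk
        · rw [if_pos (by omega), if_pos (by omega)]
        · have : k = i := Fin.ext hk
          subst this
          rw [if_pos (by omega), if_neg (by omega)]
          simp [h0]
        · rw [if_neg (by omega), if_neg (by omega)]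
      rw [heq, h0, mul_zero, sub_self]
    · have hx : ∀ k, (fun k => min (lam k) (ρ ((i : ℕ) + 1) k)) k = 0 ∨
          (fun k => min (lam k) (ρ ((i : ℕ) + 1) k)) k = 1 := by
        intro k
        dsimp only
        rw [hρ]
        rcases hl k with h | h <;> split_ifs <;> simp [h]
      have hy : ∀ k, ρ (i : ℕ) k = 0 ∨ ρ (i : ℕ) k = 1 := by
        intro k
        rw [hρ]
        split_ifs <;> simp
      have key := hsuper _ _ hx hy
      have hmax : (fun k => max (min (lam k) (ρ ((i : ℕ) + 1) k)) (ρ (i : ℕ) k))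
          = ρ ((i : ℕ) + 1) := by
        funext k
        simp only [hρ]
        split_ifs with c1 c2 c3
        · rcases hl k with h | h <;> norm_num [h]
        · have hki : k = i := Fin.ext (by omega)
          rw [hki, h1]
          norm_num
        · omega
        · rcases hl k with h | h <;> norm_num [h]
      have hmin : (fun k => min (min (lam k) (ρ ((i : ℕ) + 1) k)) (ρ (i : ℕ) k))
          = fun k => min (lam k) (ρ (i : ℕ) k) := by
        funext k
        simp only [hρ]
        split_ifs with c1 c2 c3 <;>
          first
            | omega
            | (rcases hl k with h | h <;> norm_num [h])
      rw [hmax, hmin] at key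
      have hα' : α ((i : ℕ) + 1) = f (ρ ((i : ℕ) + 1)) - f (ρ (i : ℕ)) := by
        rw [hα ((i : ℕ) + 1) (by omega) (by omega)]
        simp
      rw [h1, mul_one, hα']
      simp only [hg]
      linarith
  have hsum : g m - g 0 ≤ ∑ i : Fin m, α ((i : ℕ) + 1) * lam i := by
    calc g m - g 0 = ∑ i ∈ Finset.range m, (g (i + 1) - g i) := (Finset.sum_range_sub g m).symm
      _ = ∑ i : Fin m, (g ((i : ℕ) + 1) - g (i : ℕ)) :=
          (Fin.sum_univ_eq_sum_range (fun j => g (j + 1) - g j) m).symm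
      _ ≤ _ := Finset.sum_le_sum (fun i _ => step i)
  rw [hfc]
  linarith [hgm, hg0, hα0]
end

section
/- Let f : [0,1]^m → ℝ be convex with supermodular restriction to {0,1}^m, and b ∈ (0,1)^m nonincreasing. For every probability measure P on [0,1]^m with barycenter b (i.e., ∫ x_i dP = b_i for all i), E_P(f) ≤ Σ_{k=0}^m (b_k − b_{k+1}) f(ρ_k), with b_0 = 1, b_{m+1} = 0. Moreover equality is attained by the measure q* supported on {ρ_0,...,ρ_m} with q*(ρ_k) = b_k − b_{k+1}. -/
open MeasureTheory

private lemma abel_aux (u B : ℕ → ℝ) (n : ℕ) :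
    ∑ k ∈ Finset.range (n+1), (B k - B (k+1)) * u k
      = B 0 * u 0 - B (n+1) * u n + ∑ i ∈ Finset.range n, B (i+1) * (u (i+1) - u i) := by
  induction n with
  | zero => simp; ring
  | succ n ih => rw [Finset.sum_range_succ, ih, Finset.sum_range_succ]; ring

/-- for convex `f` on `[0,1]^m` with supermodular restriction to the
vertices, and `b ∈ (0,1)^m` nonincreasing, every Borel probability measure `P` on
the cube with barycenter `b` satisfies `E_P f ≤ Σ_k (b_k − b_{k+1}) f(ρ_k)`, and
the bound is attained by the measure `q* = Σ_k (b_k − b_{k+1}) δ_{ρ_k}`. -/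
theorem expectation_le_upper_supermodular_vertex
    (m : ℕ) (b : ℕ → ℝ)
    (hb0 : b 0 = 1) (hbtop : b (m + 1) = 0)
    (hb : ∀ i, 1 ≤ i → i ≤ m → 0 < b i ∧ b i < 1)
    (hmono : ∀ i, 1 ≤ i → i < m → b (i + 1) ≤ b i)
    (ρ : ℕ → Fin m → ℝ)
    (hρ : ∀ j i, ρ j i = if (i : ℕ) + 1 ≤ j then 1 else 0)
    (f : (Fin m → ℝ) → ℝ)
    (hconv : ConvexOn ℝ (Set.Icc (0 : Fin m → ℝ) 1) f)
    (hsuper : ∀ x y : Fin m → ℝ,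
      (∀ i, x i = 0 ∨ x i = 1) → (∀ i, y i = 0 ∨ y i = 1) →
      f x + f y ≤ f (fun i => max (x i) (y i)) + f (fun i => min (x i) (y i))) :
    (∀ P : Measure (Fin m → ℝ), IsProbabilityMeasure P →
      P (Set.Icc (0 : Fin m → ℝ) 1) = 1 →
      (∀ i : Fin m, ∫ x, x i ∂P = b ((i : ℕ) + 1)) →
      Integrable f P →
      ∫ x, f x ∂P ≤ ∑ k ∈ Finset.range (m + 1), (b k - b (k + 1)) * f (ρ k)) ∧
    (∃ Q : Measure (Fin m → ℝ),
      Q = Measure.sum (fun k : Fin (m + 1) =>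
            (ENNReal.ofReal (b k - b ((k : ℕ) + 1))) • Measure.dirac (ρ k)) ∧
      IsProbabilityMeasure Q ∧
      Q (Set.Icc (0 : Fin m → ℝ) 1) = 1 ∧
      (∀ i : Fin m, ∫ x, x i ∂Q = b ((i : ℕ) + 1)) ∧
      ∫ x, f x ∂Q = ∑ k ∈ Finset.range (m + 1), (b k - b (k + 1)) * f (ρ k)) := by
  classical
  -- basic facts
  have hstep : ∀ k, k ≤ m → b (k+1) ≤ b k := by
    intro k hk
    rcases Nat.eq_zero_or_pos k with h0 | h1
    · subst h0
      rw [hb0]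
      rcases Nat.eq_zero_or_pos m with hm | hm
      · rw [show (0:ℕ)+1 = m+1 by omega, hbtop]; norm_num
      · exact le_of_lt (hb 1 le_rfl (by omega)).2
    · rcases eq_or_lt_of_le hk with he | hlt
      · subst he; rw [hbtop]; exact le_of_lt (hb k h1 le_rfl).1
      · exact hmono k h1 hlt
  have hρ01 : ∀ k i, ρ k i = 0 ∨ ρ k i = 1 := by
    intro k i; rw [hρ]; split
    · right; rfl
    · left; rfl
  set g : (Fin m → ℝ) → ℝ :=
    fun x => f (ρ 0) + ∑ i : Fin m, x i * (f (ρ ((i:ℕ)+1)) - f (ρ (i:ℕ))) with hgdef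
  -- zero vertex
  have hzero : ∀ v : Fin m → ℝ, (∀ i, v i = 0) → f v ≤ g v := by
    intro v hv
    have hv0 : v = ρ 0 := by
      funext i; rw [hv, hρ]; simp
    have hgv : g v = f (ρ 0) := by
      simp only [hgdef]
      simp [hv]
    rw [hgv, hv0]
  -- vertex lemma
  have hvert : ∀ n : ℕ, ∀ v : Fin m → ℝ, (∀ i, v i = 0 ∨ v i = 1) →
      (Finset.univ.filter fun i => v i = 1).card ≤ n → f v ≤ g v := by
    intro n
    induction n with
    | zero =>
      intro v hv hc
      refine hzero v fun i => ?_
      rcases hv i with h | h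
      · exact h
      · exfalso
        have hmem : i ∈ Finset.univ.filter fun i => v i = 1 := by simp [h]
        have := Finset.card_pos.mpr ⟨i, hmem⟩
        omega
    | succ n ih =>
      intro v hv hc
      set S := Finset.univ.filter fun i => v i = 1 with hSdef
      by_cases hS : S = ∅
      · refine hzero v fun i => ?_
        rcases hv i with h | h
        · exact h
        · exfalso
          have hmem : i ∈ S := by simp [hSdef, h]
          simp [hS] at hmem
      · have hSne : S.Nonempty := Finset.nonempty_of_ne_empty hS
        set j := S.max' hSne with hjdef
        have hjmem : j ∈ S := S.max'_mem hSne
        have hvj : v j = 1 := by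
          have := hjmem; rw [hSdef, Finset.mem_filter] at this; exact this.2
        have hjmax : ∀ i ∈ S, i ≤ j := fun i hi => S.le_max' i hi
        have hnotS : ∀ i : Fin m, (j:ℕ) < (i:ℕ) → v i = 0 := by
          intro i hij
          rcases hv i with h | h
          · exact h
          · exfalso
            have hmem : i ∈ S := by simp [hSdef, h]
            have := hjmax i hmem
            rw [Fin.le_def] at this
            omega
        have hy := hρ01 (j:ℕ)
        have hmaxeq : (fun i => max (v i) (ρ (j:ℕ) i)) = ρ ((j:ℕ)+1) := by
          funext i
          rw [hρ, hρ]
          by_cases h1 : (i:ℕ) + 1 ≤ (j:ℕ)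
          · rw [if_pos h1, if_pos (by omega : (i:ℕ)+1 ≤ (j:ℕ)+1)]
            rcases hv i with h | h <;> rw [h] <;> norm_num
          · by_cases h2 : (i:ℕ) = (j:ℕ)
            · have hij : i = j := Fin.ext h2
              rw [if_neg h1, if_pos (by omega : (i:ℕ)+1 ≤ (j:ℕ)+1), hij, hvj]
              norm_num
            · rw [if_neg h1, if_neg (by omega : ¬ ((i:ℕ)+1 ≤ (j:ℕ)+1)),
                hnotS i (by omega)]
              norm_num
        have hmineq : (fun i => min (v i) (ρ (j:ℕ) i)) = Function.update v j 0 := by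
          funext i
          rcases eq_or_ne i j with rfl | hij
          · rw [Function.update_self, hρ, if_neg (by omega : ¬ ((j:ℕ)+1 ≤ (j:ℕ))), hvj]
            norm_num
          · rw [Function.update_of_ne hij, hρ]
            by_cases h1 : (i:ℕ) + 1 ≤ (j:ℕ)
            · rw [if_pos h1]
              rcases hv i with h | h <;> rw [h] <;> norm_num
            · have hne : (i:ℕ) ≠ (j:ℕ) := fun h => hij (Fin.ext h)
              rw [if_neg h1, hnotS i (by omega)]
              norm_num
        have hsup := hsuper v (ρ (j:ℕ)) hv hy
        rw [hmaxeq, hmineq] at hsup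
        set v' := Function.update v j 0 with hv'def
        have hv' : ∀ i, v' i = 0 ∨ v' i = 1 := by
          intro i
          rcases eq_or_ne i j with rfl | h
          · left; rw [hv'def, Function.update_self]
          · rw [hv'def, Function.update_of_ne h]; exact hv i
        have hfilt : (Finset.univ.filter fun i => v' i = 1) = S.erase j := by
          ext i
          rw [Finset.mem_erase, Finset.mem_filter, hSdef, Finset.mem_filter]
          constructor
          · intro ⟨_, hi⟩
            have hij : i ≠ j := by
              intro h; rw [h, hv'def, Function.update_self] at hi; norm_num at hi
            rw [hv'def, Function.update_of_ne hij] at hi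
            exact ⟨hij, Finset.mem_univ i, hi⟩
          · intro ⟨hij, _, hi⟩
            rw [hv'def]
            exact ⟨Finset.mem_univ i, by rw [Function.update_of_ne hij]; exact hi⟩
        have hcard : (Finset.univ.filter fun i => v' i = 1).card ≤ n := by
          rw [hfilt, Finset.card_erase_of_mem hjmem]
          omega
        have ihv' := ih v' hv' hcard
        have hgsplit : g v = g v' + (f (ρ ((j:ℕ)+1)) - f (ρ (j:ℕ))) := by
          simp only [hgdef]
          have h1 : ∑ i : Fin m, v i * (f (ρ ((i:ℕ)+1)) - f (ρ (i:ℕ)))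
              = v j * (f (ρ ((j:ℕ)+1)) - f (ρ (j:ℕ)))
                + ∑ i ∈ Finset.univ.erase j, v i * (f (ρ ((i:ℕ)+1)) - f (ρ (i:ℕ))) :=
            (Finset.add_sum_erase _ _ (Finset.mem_univ j)).symm
          have h2 : ∑ i : Fin m, v' i * (f (ρ ((i:ℕ)+1)) - f (ρ (i:ℕ)))
              = v' j * (f (ρ ((j:ℕ)+1)) - f (ρ (j:ℕ)))
                + ∑ i ∈ Finset.univ.erase j, v' i * (f (ρ ((i:ℕ)+1)) - f (ρ (i:ℕ))) :=
            (Finset.add_sum_erase _ _ (Finset.mem_univ j)).symm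
          have h3 : ∑ i ∈ Finset.univ.erase j, v' i * (f (ρ ((i:ℕ)+1)) - f (ρ (i:ℕ)))
              = ∑ i ∈ Finset.univ.erase j, v i * (f (ρ ((i:ℕ)+1)) - f (ρ (i:ℕ))) := by
            refine Finset.sum_congr rfl fun i hi => ?_
            rw [hv'def, Function.update_of_ne (Finset.ne_of_mem_erase hi)]
          rw [h1, h2, h3, hvj, hv'def, Function.update_self]
          ring
        linarith
  -- cube lemma
  have hcube : ∀ n : ℕ, ∀ x : Fin m → ℝ, x ∈ Set.Icc (0 : Fin m → ℝ) 1 →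
      (Finset.univ.filter fun i => x i ≠ 0 ∧ x i ≠ 1).card ≤ n → f x ≤ g x := by
    intro n
    induction n with
    | zero =>
      intro x hx hc
      refine hvert (Finset.univ.filter fun i => x i = 1).card x (fun i => ?_) le_rfl
      by_contra h
      push_neg at h
      have hmem : i ∈ Finset.univ.filter fun i => x i ≠ 0 ∧ x i ≠ 1 := by
        simp [h.1, h.2]
      have := Finset.card_pos.mpr ⟨i, hmem⟩
      omega
    | succ n ih =>
      intro x hx hc
      set F := Finset.univ.filter fun i => x i ≠ 0 ∧ x i ≠ 1 with hFdef
      by_cases hF : F = ∅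
      · refine hvert (Finset.univ.filter fun i => x i = 1).card x (fun i => ?_) le_rfl
        by_contra h
        push_neg at h
        have hmem : i ∈ F := by simp [hFdef, h.1, h.2]
        simp [hF] at hmem
      · obtain ⟨i, hiF⟩ := Finset.nonempty_of_ne_empty hF
        have hxi : x i ≠ 0 ∧ x i ≠ 1 := by
          rw [hFdef, Finset.mem_filter] at hiF; exact hiF.2
        have hx0i : 0 ≤ x i := hx.1 i
        have hx1i : x i ≤ 1 := hx.2 i
        set t := x i with htdef
        set x0 := Function.update x i 0 with hx0def
        set x1 := Function.update x i 1 with hx1def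
        have hx0mem : x0 ∈ Set.Icc (0 : Fin m → ℝ) 1 := by
          constructor
          · intro i''
            rcases eq_or_ne i'' i with rfl | h
            · simp [hx0def]
            · simp only [hx0def, Function.update_of_ne h, Pi.zero_apply]
              exact hx.1 i''
          · intro i''
            rcases eq_or_ne i'' i with rfl | h
            · simp [hx0def]
            · simp only [hx0def, Function.update_of_ne h, Pi.one_apply]
              exact hx.2 i''
        have hx1mem : x1 ∈ Set.Icc (0 : Fin m → ℝ) 1 := by
          constructor
          · intro i''
            rcases eq_or_ne i'' i with rfl | h
            · simp [hx1def]
            · simp only [hx1def, Function.update_of_ne h, Pi.zero_apply]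
              exact hx.1 i''
          · intro i''
            rcases eq_or_ne i'' i with rfl | h
            · simp [hx1def]
            · simp only [hx1def, Function.update_of_ne h, Pi.one_apply]
              exact hx.2 i''
        have hcomb : (1 - t) • x0 + t • x1 = x := by
          funext i''
          rcases eq_or_ne i'' i with rfl | h
          · simp [hx0def, hx1def, htdef]
          · simp only [hx0def, hx1def, Pi.add_apply, Pi.smul_apply,
              Function.update_of_ne h, smul_eq_mul]
            ring
        have hfle : f x ≤ (1 - t) * f x0 + t * f x1 := by
          have := hconv.2 hx0mem hx1mem (by linarith : (0:ℝ) ≤ 1 - t) hx0i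
            (by ring : (1 - t) + t = 1)
          rw [hcomb] at this
          simpa using this
        have hsub : ∀ y : Fin m → ℝ, y = Function.update x i 0 ∨ y = Function.update x i 1 →
            (Finset.univ.filter fun i' => y i' ≠ 0 ∧ y i' ≠ 1).card ≤ n := by
          intro y hy
          have hsubset : (Finset.univ.filter fun i' => y i' ≠ 0 ∧ y i' ≠ 1) ⊆ F.erase i := by
            intro i' hi'
            rw [Finset.mem_filter] at hi'
            have hne : i' ≠ i := by
              intro h
              rcases hy with hy | hy <;> rw [h, hy, Function.update_self] at hi'
              · exact hi'.2.1 rfl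
              · exact hi'.2.2 rfl
            rw [Finset.mem_erase]
            refine ⟨hne, ?_⟩
            rw [hFdef, Finset.mem_filter]
            rcases hy with hy | hy <;> rw [hy, Function.update_of_ne hne] at hi' <;>
              exact ⟨Finset.mem_univ i', hi'.2⟩
          have := Finset.card_le_card hsubset
          rw [Finset.card_erase_of_mem hiF] at this
          omega
        have ih0 := ih x0 hx0mem (hsub x0 (Or.inl hx0def))
        have ih1 := ih x1 hx1mem (hsub x1 (Or.inr hx1def))
        have hgcomb : (1 - t) * g x0 + t * g x1 = g x := by
          simp only [hgdef]
          have h0 : ∑ i' : Fin m, x0 i' * (f (ρ ((i':ℕ)+1)) - f (ρ (i':ℕ)))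
              = x0 i * (f (ρ ((i:ℕ)+1)) - f (ρ (i:ℕ)))
                + ∑ i' ∈ Finset.univ.erase i, x0 i' * (f (ρ ((i':ℕ)+1)) - f (ρ (i':ℕ))) :=
            (Finset.add_sum_erase _ _ (Finset.mem_univ i)).symm
          have h1 : ∑ i' : Fin m, x1 i' * (f (ρ ((i':ℕ)+1)) - f (ρ (i':ℕ)))
              = x1 i * (f (ρ ((i:ℕ)+1)) - f (ρ (i:ℕ)))
                + ∑ i' ∈ Finset.univ.erase i, x1 i' * (f (ρ ((i':ℕ)+1)) - f (ρ (i':ℕ))) :=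
            (Finset.add_sum_erase _ _ (Finset.mem_univ i)).symm
          have hx' : ∑ i' : Fin m, x i' * (f (ρ ((i':ℕ)+1)) - f (ρ (i':ℕ)))
              = x i * (f (ρ ((i:ℕ)+1)) - f (ρ (i:ℕ)))
                + ∑ i' ∈ Finset.univ.erase i, x i' * (f (ρ ((i':ℕ)+1)) - f (ρ (i':ℕ))) :=
            (Finset.add_sum_erase _ _ (Finset.mem_univ i)).symm
          have e0 : ∑ i' ∈ Finset.univ.erase i, x0 i' * (f (ρ ((i':ℕ)+1)) - f (ρ (i':ℕ)))
              = ∑ i' ∈ Finset.univ.erase i, x i' * (f (ρ ((i':ℕ)+1)) - f (ρ (i':ℕ))) :=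
            Finset.sum_congr rfl fun i' hi' => by
              rw [hx0def, Function.update_of_ne (Finset.ne_of_mem_erase hi')]
          have e1 : ∑ i' ∈ Finset.univ.erase i, x1 i' * (f (ρ ((i':ℕ)+1)) - f (ρ (i':ℕ)))
              = ∑ i' ∈ Finset.univ.erase i, x i' * (f (ρ ((i':ℕ)+1)) - f (ρ (i':ℕ))) :=
            Finset.sum_congr rfl fun i' hi' => by
              rw [hx1def, Function.update_of_ne (Finset.ne_of_mem_erase hi')]
          rw [h0, h1, hx', e0, e1, hx0def, hx1def, Function.update_self,
            Function.update_self, ← htdef]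
          ring
        have hle0 : (1 - t) * f x0 ≤ (1 - t) * g x0 :=
          mul_le_mul_of_nonneg_left ih0 (by linarith)
        have hle1 : t * f x1 ≤ t * g x1 := mul_le_mul_of_nonneg_left ih1 hx0i
        linarith
  have hpoint : ∀ x ∈ Set.Icc (0 : Fin m → ℝ) 1, f x ≤ g x := fun x hx =>
    hcube _ x hx le_rfl
  -- RHS rewriting
  have hrhs : ∑ k ∈ Finset.range (m + 1), (b k - b (k + 1)) * f (ρ k)
      = f (ρ 0) + ∑ i ∈ Finset.range m, b (i+1) * (f (ρ (i+1)) - f (ρ i)) := by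
    rw [abel_aux (fun k => f (ρ k)) b m, hb0, hbtop]
    ring
  constructor
  · -- inequality part
    intro P hP hPIcc hPbar hPint
    have hxi_int : ∀ i : Fin m, Integrable (fun x : Fin m → ℝ => x i) P := by
      intro i
      by_contra h
      have h0 := integral_undef h
      rw [hPbar i] at h0
      have := (hb ((i:ℕ)+1) (by omega) (by have := i.isLt; omega)).1
      linarith
    have hg_int : Integrable g P := by
      simp only [hgdef]
      exact (integrable_const _).add <| integrable_finset_sum _ fun i _ =>
        (hxi_int i).mul_const _
    have hae : ∀ᵐ x ∂P, x ∈ Set.Icc (0 : Fin m → ℝ) 1 := by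
      rw [ae_iff]
      have : {x : Fin m → ℝ | ¬ x ∈ Set.Icc (0 : Fin m → ℝ) 1}
          = (Set.Icc (0 : Fin m → ℝ) 1)ᶜ := rfl
      rw [this, measure_compl measurableSet_Icc (measure_ne_top P _), hPIcc,
        measure_univ, tsub_self]
    have hmono_int : ∫ x, f x ∂P ≤ ∫ x, g x ∂P := by
      refine integral_mono_ae hPint hg_int ?_
      filter_upwards [hae] with x hx using hpoint x hx
    have hgval : ∫ x, g x ∂P
        = f (ρ 0) + ∑ i ∈ Finset.range m, b (i+1) * (f (ρ (i+1)) - f (ρ i)) := by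
      simp only [hgdef]
      rw [integral_add (integrable_const _)
        (integrable_finset_sum _ fun i _ => (hxi_int i).mul_const _),
        integral_const, integral_finset_sum _ fun i _ => (hxi_int i).mul_const _]
      have : ∀ i : Fin m, ∫ x, x i * (f (ρ ((i:ℕ)+1)) - f (ρ (i:ℕ))) ∂P
          = b ((i:ℕ)+1) * (f (ρ ((i:ℕ)+1)) - f (ρ (i:ℕ))) := by
        intro i
        rw [integral_mul_const, hPbar i]
      rw [Finset.sum_congr rfl fun i _ => this i]
      simp [Fin.sum_univ_eq_sum_range (fun i => b (i+1) * (f (ρ (i+1)) - f (ρ i))) m]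
    rw [hrhs, ← hgval]
    exact hmono_int
  · -- equality part
    set w : Fin (m+1) → ENNReal := fun k => ENNReal.ofReal (b k - b ((k:ℕ) + 1)) with hwdef
    set Q : Measure (Fin m → ℝ) := Measure.sum (fun k : Fin (m + 1) => w k • Measure.dirac (ρ k))
      with hQdef
    have hwnn : ∀ k : Fin (m+1), 0 ≤ b k - b ((k:ℕ)+1) := fun k =>
      sub_nonneg.mpr (hstep k (by have := k.isLt; omega))
    have hQfin : Q = ∑ k : Fin (m+1), w k • Measure.dirac (ρ k) := by
      rw [hQdef, Measure.sum_fintype]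
    -- generic integral against Q
    have hQint : ∀ h : (Fin m → ℝ) → ℝ,
        ∫ x, h x ∂Q = ∑ k ∈ Finset.range (m + 1), (b k - b (k + 1)) * h (ρ k) := by
      intro h
      have hint : ∀ k : Fin (m+1), Integrable h (w k • Measure.dirac (ρ k)) := by
        intro k
        have hdint : Integrable h (Measure.dirac (ρ k)) := by
          have haes : h =ᵐ[Measure.dirac (ρ k)] fun _ => h (ρ k) := by
            rw [MeasureTheory.ae_dirac_eq]
            exact Filter.eventually_pure.mpr rfl
          exact (integrable_const (h (ρ k))).congr haes.symm
        rcases eq_or_ne (w k) 0 with h0 | h0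
        · rw [h0, zero_smul]
          exact integrable_zero_measure
        · exact (integrable_smul_measure h0 ENNReal.ofReal_ne_top).mpr hdint
      rw [hQfin, integral_finset_sum_measure fun k _ => hint k]
      have hterm : ∀ k : Fin (m+1),
          ∫ x, h x ∂(w k • Measure.dirac (ρ k)) = (b k - b ((k:ℕ)+1)) * h (ρ k) := by
        intro k
        rw [integral_smul_measure, integral_dirac, hwdef, ENNReal.toReal_ofReal (hwnn k),
          smul_eq_mul]
      rw [Finset.sum_congr rfl fun k _ => hterm k]
      exact Fin.sum_univ_eq_sum_range (fun k => (b k - b (k+1)) * h (ρ k)) (m+1)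
    have hQuniv : Q Set.univ = 1 := by
      rw [hQdef, Measure.sum_apply _ MeasurableSet.univ]
      have : ∀ k : Fin (m+1), (w k • Measure.dirac (ρ k)) Set.univ = w k := by
        intro k
        simp [Measure.smul_apply]
      rw [tsum_congr this, tsum_fintype]
      rw [← ENNReal.ofReal_one]
      have hsum : ∑ k : Fin (m+1), w k
          = ENNReal.ofReal (∑ k ∈ Finset.range (m+1), (b k - b (k+1))) := by
        rw [ENNReal.ofReal_sum_of_nonneg fun k hk => sub_nonneg.mpr
          (hstep k (Nat.lt_succ_iff.mp (Finset.mem_range.mp hk)))]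
        simp only [hwdef]
        exact Fin.sum_univ_eq_sum_range (fun k => ENNReal.ofReal (b k - b (k+1))) (m+1)
      rw [hsum, Finset.sum_range_sub' b (m+1), hbtop, hb0]
      norm_num
    have hQprob : IsProbabilityMeasure Q := ⟨hQuniv⟩
    refine ⟨Q, hQdef, hQprob, ?_, ?_, hQint f⟩
    · -- Q (Icc) = 1
      rw [hQdef, Measure.sum_apply _ measurableSet_Icc]
      have hρmem : ∀ k : ℕ, ρ k ∈ Set.Icc (0 : Fin m → ℝ) 1 := by
        intro k
        constructor <;> intro i <;> rcases hρ01 k i with h | h <;> rw [h] <;> norm_num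
      have : ∀ k : Fin (m+1), (w k • Measure.dirac (ρ k)) (Set.Icc (0:Fin m → ℝ) 1) = w k := by
        intro k
        rw [Measure.smul_apply, Measure.dirac_apply' _ measurableSet_Icc,
          Set.indicator_of_mem (hρmem k)]
        simp
      rw [tsum_congr this, tsum_fintype]
      have := hQuniv
      rw [hQdef, Measure.sum_apply _ MeasurableSet.univ] at this
      rw [← this, tsum_fintype]
      refine Finset.sum_congr rfl fun k _ => ?_
      simp [Measure.smul_apply]
    · -- barycenter
      intro i
      rw [hQint (fun x => x i)]
      have hterm : ∀ k ∈ Finset.range (m+1),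
          (b k - b (k+1)) * ρ k i
            = b (max k ((i:ℕ)+1)) - b (max (k+1) ((i:ℕ)+1)) := by
        intro k _
        rw [hρ]
        by_cases hk : (i:ℕ) + 1 ≤ k
        · rw [if_pos hk, max_eq_left hk, max_eq_left (by omega)]
          ring
        · rw [if_neg hk, max_eq_right (by omega), max_eq_right (by omega)]
          ring
      rw [Finset.sum_congr rfl hterm,
        Finset.sum_range_sub' (fun k => b (max k ((i:ℕ)+1))) (m+1)]
      have h1 : max 0 ((i:ℕ)+1) = (i:ℕ)+1 := by omega
      have h2 : max (m+1) ((i:ℕ)+1) = m+1 := by have := i.isLt; omega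
      rw [h1, h2, hbtop]
      ring
end

section
/- Let b ∈ (0,1)^m be nonincreasing and f : [0,1]^m → ℝ continuous, convex, nonnegative, with supermodular restriction to {0,1}^m. Then sup over non-degenerate probability densities p on [0,1]^m with barycenter b of ∫ f p dμ equals Σ_{k=0}^m (b_k − b_{k+1}) f(ρ_k), and this common value is also the maximum of E_P(f) over all Borel probability measures P with barycenter b. -/
set_option maxHeartbeats 1000000

open MeasureTheory

section OneStepAux
open Finset

lemma aux_abel (m : ℕ) (b F : ℕ → ℝ) :
    ∑ k ∈ Finset.range (m+1), (b k - b (k+1)) * F k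
      = b 0 * F 0 - b (m+1) * F m + ∑ k ∈ Finset.range m, b (k+1) * (F (k+1) - F k) := by
  induction m with
  | zero => simp; ring
  | succ n ih =>
      rw [Finset.sum_range_succ, ih, Finset.sum_range_succ (fun k => b (k+1) * (F (k+1) - F k))]
      ring

lemma aux_tel (b : ℕ → ℝ) : ∀ (n j : ℕ), j + 1 < n →
    ∑ k ∈ Finset.range n, (b k - b (k+1)) * (if j + 1 ≤ k then (1:ℝ) else 0)
      = b (j+1) - b n := by
  intro n
  induction n with
  | zero => intro j h; omega
  | succ n ih =>
      intro j h
      rw [Finset.sum_range_succ]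
      rcases Nat.lt_or_ge (j+1) n with hn | hn
      · rw [ih j hn, if_pos (by omega)]; ring
      · have hj : j + 1 = n := by omega
        subst hj
        rw [if_pos (le_refl _)]
        have : ∑ k ∈ Finset.range (j+1), (b k - b (k+1)) * (if j + 1 ≤ k then (1:ℝ) else 0) = 0 := by
          apply Finset.sum_eq_zero
          intro k hk
          rw [Finset.mem_range] at hk
          rw [if_neg (by omega), mul_zero]
        rw [this]; ring


lemma aux_vertex (m : ℕ) (ρ : ℕ → Fin m → ℝ)
    (hρ : ∀ j i, ρ j i = if (i : ℕ) + 1 ≤ j then 1 else 0)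
    (f : (Fin m → ℝ) → ℝ)
    (hsuper : ∀ x y : Fin m → ℝ,
      (∀ i, x i = 0 ∨ x i = 1) → (∀ i, y i = 0 ∨ y i = 1) →
      f x + f y ≤ f (fun i => max (x i) (y i)) + f (fun i => min (x i) (y i)))
    (S : Finset (Fin m)) :
    f (fun i => if i ∈ S then 1 else 0)
      ≤ f (ρ 0) + ∑ j ∈ S, (f (ρ ((j:ℕ)+1)) - f (ρ (j:ℕ))) := by
  induction S using Finset.induction_on_max with
  | empty =>
      have : (fun i : Fin m => if i ∈ (∅ : Finset (Fin m)) then (1:ℝ) else 0) = ρ 0 := by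
        funext i; simp [hρ]
      rw [this]; simp
  | insert a S hlt ih =>
      have hx01 : ∀ i : Fin m, (if i ∈ insert a S then (1:ℝ) else 0) = 0 ∨ (if i ∈ insert a S then (1:ℝ) else 0) = 1 := by
        intro i; by_cases h : i ∈ insert a S <;> simp [h]
      have hy01 : ∀ i, ρ (a:ℕ) i = 0 ∨ ρ (a:ℕ) i = 1 := by
        intro i; rw [hρ]; by_cases h : (i:ℕ)+1 ≤ (a:ℕ) <;> simp [h]
      have key := hsuper (fun i => if i ∈ insert a S then 1 else 0) (ρ (a:ℕ)) hx01 hy01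
      have hmax : (fun i => max ((fun i : Fin m => if i ∈ insert a S then (1:ℝ) else 0) i) (ρ (a:ℕ) i)) = ρ ((a:ℕ)+1) := by
        funext i
        show (if i ∈ insert a S then (1:ℝ) else 0) ⊔ ρ (a:ℕ) i = ρ ((a:ℕ)+1) i
        rw [hρ, hρ]
        rcases lt_trichotomy i a with h | h | h
        · have h1 : (i:ℕ)+1 ≤ (a:ℕ) := h
          have h2 : (i:ℕ)+1 ≤ (a:ℕ)+1 := by omega
          rcases hx01 i with hv | hv <;> simp [hv, h1, h2] <;> split_ifs <;> norm_num
        · have hia : (i:ℕ) = (a:ℕ) := by rw [h]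
          have hm : i ∈ insert a S := by rw [h]; exact Finset.mem_insert_self _ _
          have hn1 : ¬((i:ℕ)+1 ≤ (a:ℕ)) := by omega
          have h2 : (i:ℕ)+1 ≤ (a:ℕ)+1 := by omega
          simp [hm, hn1, h2]
        · have hni : i ∉ insert a S := by
            simp only [Finset.mem_insert]
            push_neg
            exact ⟨Fin.ne_of_gt h, fun hi => absurd (hlt i hi) (not_lt.2 h.le)⟩
          have hn1 : ¬((i:ℕ)+1 ≤ (a:ℕ)) := by omega
          have hn2 : ¬((i:ℕ)+1 ≤ (a:ℕ)+1) := by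
            have := h
            rw [Fin.lt_def] at this
            omega
          simp [hni, hn1, hn2]
      have hmin : (fun i => min ((fun i : Fin m => if i ∈ insert a S then (1:ℝ) else 0) i) (ρ (a:ℕ) i)) = (fun i => if i ∈ S then (1:ℝ) else 0) := by
        funext i
        show (if i ∈ insert a S then (1:ℝ) else 0) ⊓ ρ (a:ℕ) i = (if i ∈ S then (1:ℝ) else 0)
        rw [hρ]
        rcases lt_trichotomy i a with h | h | h
        · have h1 : (i:ℕ)+1 ≤ (a:ℕ) := h
          by_cases hi : i ∈ S
          · simp [h1, hi, Finset.mem_insert_of_mem hi]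
          · have hni : i ∉ insert a S := by
              simp only [Finset.mem_insert]; push_neg; exact ⟨Fin.ne_of_lt h, hi⟩
            simp [h1, hi, hni]
        · have hia : (i:ℕ) = (a:ℕ) := by rw [h]
          have hm : i ∈ insert a S := by rw [h]; exact Finset.mem_insert_self _ _
          have hni : i ∉ S := fun hi => absurd (hlt i hi) (by rw [h]; exact lt_irrefl a)
          have hn1 : ¬((i:ℕ)+1 ≤ (a:ℕ)) := by omega
          simp [hm, hni, hn1]
        · have hni : i ∉ insert a S := by
            simp only [Finset.mem_insert]
            push_neg
            exact ⟨Fin.ne_of_gt h, fun hi => absurd (hlt i hi) (not_lt.2 h.le)⟩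
          have hni' : i ∉ S := fun hi => hni (Finset.mem_insert_of_mem hi)
          have hn1 : ¬((i:ℕ)+1 ≤ (a:ℕ)) := by omega
          simp [hni, hni', hn1]
      rw [hmax, hmin] at key
      have hanotS : a ∉ S := fun h => absurd (hlt a h) (lt_irrefl a)
      rw [Finset.sum_insert hanotS]
      linarith [ih]

lemma aux_hull (m : ℕ) :
    Set.Icc (0 : Fin m → ℝ) 1
      = convexHull ℝ {v : Fin m → ℝ | ∀ i, v i = 0 ∨ v i = 1} := by
  have h1 : {v : Fin m → ℝ | ∀ i, v i = 0 ∨ v i = 1}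
      = Set.univ.pi (fun _ : Fin m => ({0, 1} : Set ℝ)) := by
    ext v; simp [Set.mem_pi]
  rw [h1, convexHull_pi]
  have h2 : ∀ i : Fin m, convexHull ℝ ({0, 1} : Set ℝ) = Set.Icc (0:ℝ) 1 := by
    intro i
    rw [convexHull_pair, segment_eq_Icc zero_le_one]
  rw [← Set.pi_univ_Icc]
  exact Set.pi_congr rfl fun i _ => (h2 i).symm

lemma aux_pointwise (m : ℕ) (ρ : ℕ → Fin m → ℝ)
    (hρ : ∀ j i, ρ j i = if (i : ℕ) + 1 ≤ j then 1 else 0)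
    (f : (Fin m → ℝ) → ℝ)
    (hconv : ConvexOn ℝ (Set.Icc (0 : Fin m → ℝ) 1) f)
    (hsuper : ∀ x y : Fin m → ℝ,
      (∀ i, x i = 0 ∨ x i = 1) → (∀ i, y i = 0 ∨ y i = 1) →
      f x + f y ≤ f (fun i => max (x i) (y i)) + f (fun i => min (x i) (y i)))
    (y : Fin m → ℝ) (hy : y ∈ Set.Icc (0 : Fin m → ℝ) 1) :
    f y ≤ f (ρ 0) + ∑ j : Fin m, (f (ρ ((j:ℕ)+1)) - f (ρ (j:ℕ))) * y j := by
  set Δ : Fin m → ℝ := fun j => f (ρ ((j:ℕ)+1)) - f (ρ (j:ℕ)) with hΔ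
  have hlinear : ∀ (a b : ℝ) (x z : Fin m → ℝ),
      (∑ j, Δ j * (a • x + b • z) j) = a * ∑ j, Δ j * x j + b * ∑ j, Δ j * z j := by
    intros a b x z
    simp only [Pi.add_apply, Pi.smul_apply, smul_eq_mul, Finset.mul_sum, ← Finset.sum_add_distrib]
    exact Finset.sum_congr rfl fun j _ => by ring
  have hlin : ConcaveOn ℝ (Set.Icc (0 : Fin m → ℝ) 1) (fun z => ∑ j, Δ j * z j) := by
    refine ⟨convex_Icc _ _, fun x hx z hz a b ha hb hab => le_of_eq ?_⟩
    exact (hlinear a b x z).symm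
  have hg : ConvexOn ℝ (Set.Icc (0 : Fin m → ℝ) 1)
      (fun z => f z - ∑ j, Δ j * z j) := hconv.sub hlin
  have hVsub : {v : Fin m → ℝ | ∀ i, v i = 0 ∨ v i = 1} ⊆ Set.Icc (0:Fin m → ℝ) 1 := by
    intro v hv
    constructor <;> intro i <;> rcases hv i with h | h <;> simp [h]
  have hy' : y ∈ convexHull ℝ {v : Fin m → ℝ | ∀ i, v i = 0 ∨ v i = 1} := by
    rw [← aux_hull m]; exact hy
  obtain ⟨v, hvV, hle⟩ := hg.exists_ge_of_mem_convexHull hVsub hy'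
  -- now bound g v ≤ 0 using aux_vertex
  set S : Finset (Fin m) := Finset.univ.filter (fun i => v i = 1) with hS
  have hvchi : v = fun i => if i ∈ S then (1:ℝ) else 0 := by
    funext i
    by_cases h : v i = 1
    · rw [if_pos (by simp [hS, h])]; exact h
    · rw [if_neg (by simp [hS, h])]
      rcases hvV i with h0 | h1
      · exact h0
      · exact absurd h1 h
  have hvert := aux_vertex m ρ hρ f hsuper S
  have hsum : ∑ j, Δ j * v j = ∑ j ∈ S, Δ j := by
    rw [hvchi]
    simp only [mul_ite, mul_one, mul_zero]
    rw [Finset.sum_ite_mem, Finset.univ_inter]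
  have hgv : f v - ∑ j, Δ j * v j ≤ f (ρ 0) := by
    rw [hsum, ← hvchi] at *
    rw [hvchi]
    linarith [hvert]
  have := hle
  linarith [this, hgv]


lemma aux1d_one (α β : ℝ) (h : α ≤ β) :
    ∫ x : ℝ, (Set.Icc α β).indicator (fun _ => (1:ℝ)) x = β - α := by
  rw [show (fun _ => (1:ℝ)) = (1 : ℝ → ℝ) from rfl]
  rw [integral_indicator_one measurableSet_Icc, Real.volume_real_Icc_of_le h]

lemma aux1d_id (α β : ℝ) (h : α ≤ β) :
    ∫ x : ℝ, (Set.Icc α β).indicator (fun t => t) x = (β^2 - α^2)/2 := by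
  rw [integral_indicator measurableSet_Icc, integral_Icc_eq_integral_Ioc,
    ← intervalIntegral.integral_of_le h, integral_id]

lemma aux_box_prod_repr (m : ℕ) (a c : Fin m → ℝ) (g : Fin m → ℝ → ℝ) (y : Fin m → ℝ) :
    (Set.Icc a c).indicator (fun y => ∏ i, g i (y i)) y
      = ∏ i, (Set.Icc (a i) (c i)).indicator (g i) (y i) := by
  by_cases hy : y ∈ Set.Icc a c
  · rw [Set.indicator_of_mem hy]
    refine Finset.prod_congr rfl fun i _ => ?_
    rw [Set.indicator_of_mem]
    rw [Set.mem_Icc] at hy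
    exact Set.mem_Icc.2 ⟨hy.1 i, hy.2 i⟩
  · rw [Set.indicator_of_notMem hy]
    have : ∃ i : Fin m, y i ∉ Set.Icc (a i) (c i) := by
      by_contra hc
      push_neg at hc
      exact hy (Set.mem_Icc.2 ⟨fun i => (hc i).1, fun i => (hc i).2⟩)
    obtain ⟨i, hi⟩ := this
    exact (Finset.prod_eq_zero (Finset.mem_univ i)
      (by rw [Set.indicator_of_notMem hi])).symm

lemma aux_box_one (m : ℕ) (a c : Fin m → ℝ) (h : ∀ i, a i ≤ c i) :
    ∫ y : Fin m → ℝ, (Set.Icc a c).indicator (fun _ => (1:ℝ)) y = ∏ i, (c i - a i) := by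
  have : (fun y : Fin m → ℝ => (Set.Icc a c).indicator (fun _ => (1:ℝ)) y)
      = fun y => ∏ i, (Set.Icc (a i) (c i)).indicator (fun _ => (1:ℝ)) (y i) := by
    funext y
    rw [show (fun _ : Fin m → ℝ => (1:ℝ)) = (fun y : Fin m → ℝ => ∏ i : Fin m, (1:ℝ)) by
      funext z; simp]
    exact aux_box_prod_repr m a c (fun _ _ => 1) y
  rw [this, MeasureTheory.integral_fintype_prod_volume_eq_prod
    (f := fun i => (Set.Icc (a i) (c i)).indicator (fun _ => (1:ℝ)))]
  exact Finset.prod_congr rfl fun i _ => aux1d_one (a i) (c i) (h i)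

lemma aux_box_coord (m : ℕ) (a c : Fin m → ℝ) (h : ∀ i, a i ≤ c i) (j : Fin m) :
    ∫ y : Fin m → ℝ, (Set.Icc a c).indicator (fun y => y j) y
      = (∏ i, (c i - a i)) * ((a j + c j)/2) := by
  have hrepr : (fun y : Fin m → ℝ => (Set.Icc a c).indicator (fun y => y j) y)
      = fun y => ∏ i, (Set.Icc (a i) (c i)).indicator (fun t => if i = j then t else 1) (y i) := by
    funext y
    rw [show (fun y : Fin m → ℝ => y j)
        = (fun y : Fin m → ℝ => ∏ i : Fin m, (if i = j then y i else 1)) by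
      funext z; rw [Finset.prod_ite_eq' Finset.univ j (fun i => z i), if_pos (Finset.mem_univ j)]]
    exact aux_box_prod_repr m a c (fun i t => if i = j then t else 1) y
  rw [hrepr, MeasureTheory.integral_fintype_prod_volume_eq_prod
    (f := fun i => (Set.Icc (a i) (c i)).indicator (fun t => if i = j then t else 1))]
  have hval : ∀ i : Fin m, (∫ x : ℝ, (Set.Icc (a i) (c i)).indicator
      (fun t => if i = j then t else 1) x)
      = (c i - a i) * (if i = j then (a j + c j)/2 else 1) := by
    intro i
    by_cases hij : i = j
    · subst hij
      simp only [eq_self_iff_true, if_true]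
      rw [aux1d_id (a i) (c i) (h i)]
      ring
    · simp only [if_neg hij]
      rw [aux1d_one (a i) (c i) (h i)]
      ring
  rw [Finset.prod_congr rfl fun i _ => hval i, Finset.prod_mul_distrib,
    Finset.prod_ite_eq' Finset.univ j (fun _ => (a j + c j)/2), if_pos (Finset.mem_univ j)]


lemma aux_drop_restrict (m : ℕ) (B : Set (Fin m → ℝ)) (hB : MeasurableSet B)
    (hsub : B ⊆ Set.Icc (0:Fin m → ℝ) 1) (g : (Fin m → ℝ) → ℝ) :
    ∫ y, B.indicator g y ∂(volume.restrict (Set.Icc (0:Fin m → ℝ) 1))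
      = ∫ y, B.indicator g y := by
  rw [integral_indicator hB, integral_indicator hB, Measure.restrict_restrict hB,
    Set.inter_eq_self_of_subset_left hsub]

/-- the normalized uniform density on the box `Icc a c` -/
noncomputable def boxD (m : ℕ) (a c : Fin m → ℝ) : (Fin m → ℝ) → ℝ :=
  (Set.Icc a c).indicator (fun _ => (∏ i, (c i - a i))⁻¹)

lemma boxD_nonneg (m : ℕ) (a c : Fin m → ℝ) (hlt : ∀ i, a i < c i) (y : Fin m → ℝ) :
    0 ≤ boxD m a c y := by
  have hpos : (0:ℝ) < ∏ i, (c i - a i) := Finset.prod_pos fun i _ => sub_pos.2 (hlt i)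
  unfold boxD
  apply Set.indicator_nonneg
  intro y _
  positivity

lemma boxD_le (m : ℕ) (a c : Fin m → ℝ) (hlt : ∀ i, a i < c i) (y : Fin m → ℝ) :
    boxD m a c y ≤ (∏ i, (c i - a i))⁻¹ := by
  have hpos : (0:ℝ) < ∏ i, (c i - a i) := Finset.prod_pos fun i _ => sub_pos.2 (hlt i)
  unfold boxD
  by_cases h : y ∈ Set.Icc a c
  · rw [Set.indicator_of_mem h]
  · rw [Set.indicator_of_notMem h]; positivity

lemma boxD_measurable (m : ℕ) (a c : Fin m → ℝ) : Measurable (boxD m a c) :=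
  (measurable_const.indicator measurableSet_Icc)

lemma boxD_int_one (m : ℕ) (a c : Fin m → ℝ) (hlt : ∀ i, a i < c i)
    (hsub : Set.Icc a c ⊆ Set.Icc (0:Fin m → ℝ) 1) :
    ∫ y, boxD m a c y ∂(volume.restrict (Set.Icc (0:Fin m → ℝ) 1)) = 1 := by
  unfold boxD
  rw [aux_drop_restrict m _ measurableSet_Icc hsub]
  have : (Set.Icc a c).indicator (fun _ : Fin m → ℝ => (∏ i, (c i - a i))⁻¹)
      = fun y => (∏ i, (c i - a i))⁻¹ * (Set.Icc a c).indicator (fun _ => (1:ℝ)) y := by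
    funext y
    by_cases h : y ∈ Set.Icc a c <;> simp [Set.indicator_of_mem, Set.indicator_of_notMem, h]
  rw [this, integral_const_mul, aux_box_one m a c (fun i => (hlt i).le)]
  have hpos : (0:ℝ) < ∏ i, (c i - a i) := Finset.prod_pos fun i _ => sub_pos.2 (hlt i)
  field_simp

lemma boxD_int_coord (m : ℕ) (a c : Fin m → ℝ) (hlt : ∀ i, a i < c i)
    (hsub : Set.Icc a c ⊆ Set.Icc (0:Fin m → ℝ) 1) (j : Fin m) :
    ∫ y, y j * boxD m a c y ∂(volume.restrict (Set.Icc (0:Fin m → ℝ) 1))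
      = (a j + c j)/2 := by
  unfold boxD
  have heq : (fun y : Fin m → ℝ => y j * (Set.Icc a c).indicator
        (fun _ => (∏ i, (c i - a i))⁻¹) y)
      = fun y => (∏ i, (c i - a i))⁻¹ * (Set.Icc a c).indicator (fun y => y j) y := by
    funext y
    by_cases h : y ∈ Set.Icc a c <;>
      simp [Set.indicator_of_mem, Set.indicator_of_notMem, h, mul_comm]
  rw [heq]
  have heq2 : ∀ ν : Measure (Fin m → ℝ), ∫ y, (∏ i, (c i - a i))⁻¹ *
      (Set.Icc a c).indicator (fun y => y j) y ∂ν
      = (∏ i, (c i - a i))⁻¹ * ∫ y, (Set.Icc a c).indicator (fun y => y j) y ∂ν :=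
    fun ν => integral_const_mul _ _
  rw [heq2, aux_drop_restrict m _ measurableSet_Icc hsub, aux_box_coord m a c (fun i => (hlt i).le) j]
  have hpos : (0:ℝ) < ∏ i, (c i - a i) := Finset.prod_pos fun i _ => sub_pos.2 (hlt i)
  field_simp

lemma boxD_int_f (m : ℕ) (a c : Fin m → ℝ) (hlt : ∀ i, a i < c i)
    (hsub : Set.Icc a c ⊆ Set.Icc (0:Fin m → ℝ) 1) (f : (Fin m → ℝ) → ℝ)
    (hcont : ContinuousOn f (Set.Icc (0 : Fin m → ℝ) 1))
    (x₀ : Fin m → ℝ) (δ : ℝ) (hδ : ∀ y ∈ Set.Icc a c, |f y - f x₀| ≤ δ) :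
    |(∫ y, f y * boxD m a c y ∂(volume.restrict (Set.Icc (0:Fin m → ℝ) 1))) - f x₀| ≤ δ := by
  unfold boxD
  have hpos : (0:ℝ) < ∏ i, (c i - a i) := Finset.prod_pos fun i _ => sub_pos.2 (hlt i)
  have heq : (fun y : Fin m → ℝ => f y * (Set.Icc a c).indicator
        (fun _ => (∏ i, (c i - a i))⁻¹) y)
      = fun y => (∏ i, (c i - a i))⁻¹ * (Set.Icc a c).indicator f y := by
    funext y
    by_cases h : y ∈ Set.Icc a c <;>
      simp [Set.indicator_of_mem, Set.indicator_of_notMem, h, mul_comm]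
  rw [heq]
  have heq2 : ∫ y, (∏ i, (c i - a i))⁻¹ * (Set.Icc a c).indicator f y
      ∂(volume.restrict (Set.Icc (0:Fin m → ℝ) 1))
      = (∏ i, (c i - a i))⁻¹ * ∫ y, (Set.Icc a c).indicator f y
        ∂(volume.restrict (Set.Icc (0:Fin m → ℝ) 1)) := integral_const_mul _ _
  rw [heq2, aux_drop_restrict m _ measurableSet_Icc hsub, integral_indicator measurableSet_Icc]
  -- now: |vinv * ∫ y in box, f - f x₀| ≤ δ
  have hvol : (volume (Set.Icc a c)).toReal = ∏ i, (c i - a i) := by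
    rw [Real.volume_Icc_pi, ENNReal.toReal_prod]
    exact Finset.prod_congr rfl fun i _ => ENNReal.toReal_ofReal (by linarith [hlt i])
  have hfint : IntegrableOn f (Set.Icc a c) volume :=
    ContinuousOn.integrableOn_compact isCompact_Icc (hcont.mono hsub)
  have hsplit : ∫ y in Set.Icc a c, f y
      = (∫ y in Set.Icc a c, (f y - f x₀)) + (∏ i, (c i - a i)) * f x₀ := by
    rw [integral_sub hfint (integrableOn_const (LT.lt.ne ?_))]
    · rw [setIntegral_const, smul_eq_mul, measureReal_def, hvol]; ring
    · rw [Real.volume_Icc_pi]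
      exact ENNReal.prod_lt_top (fun i _ => ENNReal.ofReal_lt_top)
  have hbnd : |∫ y in Set.Icc a c, (f y - f x₀)| ≤ δ * ∏ i, (c i - a i) := by
    have := norm_setIntegral_le_of_norm_le_const (μ := volume) (s := Set.Icc a c)
      (f := fun y => f y - f x₀) (C := δ) ?_ ?_
    · rw [Real.norm_eq_abs] at this
      calc |∫ y in Set.Icc a c, (f y - f x₀)| ≤ δ * (volume (Set.Icc a c)).toReal := this
        _ = δ * ∏ i, (c i - a i) := by rw [hvol]
    · rw [Real.volume_Icc_pi]
      exact ENNReal.prod_lt_top (fun i _ => ENNReal.ofReal_lt_top)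
    · intro x hx
      rw [Real.norm_eq_abs]
      exact hδ x hx
  rw [hsplit]
  have : (∏ i, (c i - a i))⁻¹ * ((∫ y in Set.Icc a c, (f y - f x₀)) + (∏ i, (c i - a i)) * f x₀)
      - f x₀ = (∏ i, (c i - a i))⁻¹ * (∫ y in Set.Icc a c, (f y - f x₀)) := by
    field_simp
    ring
  rw [this, abs_mul, abs_of_pos (by positivity)]
  calc (∏ i, (c i - a i))⁻¹ * |∫ y in Set.Icc a c, (f y - f x₀)|
      ≤ (∏ i, (c i - a i))⁻¹ * (δ * ∏ i, (c i - a i)) := by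
        apply mul_le_mul_of_nonneg_left hbnd (by positivity)
    _ = δ := by field_simp


lemma aux_V_eq (m : ℕ) (b : ℕ → ℝ) (hb0 : b 0 = 1) (hbtop : b (m+1) = 0)
    (F : ℕ → ℝ) :
    ∑ k ∈ Finset.range (m + 1), (b k - b (k + 1)) * F k
      = F 0 + ∑ j : Fin m, (F ((j:ℕ)+1) - F (j:ℕ)) * b ((j:ℕ)+1) := by
  rw [aux_abel m b F, hb0, hbtop, Fin.sum_univ_eq_sum_range
    (fun j => (F (j+1) - F j) * b (j+1)) m]
  rw [Finset.sum_congr rfl (fun k _ => by ring :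
    ∀ k ∈ Finset.range m, (F (k+1) - F k) * b (k+1) = b (k+1) * (F (k+1) - F k))]
  ring

lemma aux_rho_mem (m : ℕ) (ρ : ℕ → Fin m → ℝ)
    (hρ : ∀ j i, ρ j i = if (i : ℕ) + 1 ≤ j then 1 else 0) (k : ℕ) :
    ρ k ∈ Set.Icc (0 : Fin m → ℝ) 1 := by
  constructor <;> intro i <;> rw [hρ] <;> by_cases h : (i:ℕ)+1 ≤ k <;> simp [h]

lemma aux_integrable_dirac_smul (m : ℕ) (g : (Fin m → ℝ) → ℝ) (x : Fin m → ℝ) (wk : ℝ) :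
    Integrable g ((ENNReal.ofReal wk) • Measure.dirac x) := by
  constructor
  · refine ⟨fun _ => g x, stronglyMeasurable_const, ?_⟩
    refine Measure.absolutelyContinuous_of_le_smul (c := ENNReal.ofReal wk) le_rfl |>.ae_le ?_
    rw [MeasureTheory.ae_dirac_eq]
    exact Filter.eventually_pure.2 rfl
  · rw [HasFiniteIntegral, lintegral_smul_measure, lintegral_dirac]
    exact ENNReal.mul_lt_top ENNReal.ofReal_lt_top (by simp)

lemma aux_integral_dirac_smul (m : ℕ) (g : (Fin m → ℝ) → ℝ) (x : Fin m → ℝ) (wk : ℝ) (hw : 0 ≤ wk) :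
    ∫ y, g y ∂((ENNReal.ofReal wk) • Measure.dirac x) = wk * g x := by
  rw [integral_smul_measure, integral_dirac, ENNReal.toReal_ofReal hw, smul_eq_mul]

lemma aux_w_nonneg (m : ℕ) (b : ℕ → ℝ)
    (hb0 : b 0 = 1) (hbtop : b (m + 1) = 0)
    (hb : ∀ i, 1 ≤ i → i ≤ m → 0 < b i ∧ b i < 1)
    (hmono : ∀ i, 1 ≤ i → i < m → b (i + 1) ≤ b i) :
    ∀ k ∈ Finset.range (m+1), 0 ≤ b k - b (k+1) := by
  intro k hk
  rw [Finset.mem_range] at hk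
  rcases Nat.eq_zero_or_pos k with rfl | hk0
  · rcases Nat.eq_zero_or_pos m with rfl | hm0
    · rw [hb0, hbtop]; norm_num
    · have := (hb 1 le_rfl hm0).2
      rw [hb0]; linarith
  · rcases Nat.lt_or_ge k m with hkm | hkm
    · linarith [hmono k hk0 hkm]
    · have hkm' : k = m := by omega
      subst hkm'
      rw [hbtop]
      rcases Nat.eq_zero_or_pos k with rfl | hm0
      · rw [hb0]; norm_num
      · linarith [(hb k hm0 le_rfl).1]

lemma aux_w_sum (m : ℕ) (b : ℕ → ℝ) (hb0 : b 0 = 1) (hbtop : b (m + 1) = 0) :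
    ∑ k ∈ Finset.range (m+1), (b k - b (k+1)) = 1 := by
  rw [Finset.sum_range_sub' b (m+1), hb0, hbtop, sub_zero]



lemma aux_upper_measure (m : ℕ) (b : ℕ → ℝ) (hb0 : b 0 = 1) (hbtop : b (m + 1) = 0)
    (ρ : ℕ → Fin m → ℝ)
    (hρ : ∀ j i, ρ j i = if (i : ℕ) + 1 ≤ j then 1 else 0)
    (f : (Fin m → ℝ) → ℝ)
    (hcont : ContinuousOn f (Set.Icc (0 : Fin m → ℝ) 1))
    (hconv : ConvexOn ℝ (Set.Icc (0 : Fin m → ℝ) 1) f)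
    (hsuper : ∀ x y : Fin m → ℝ,
      (∀ i, x i = 0 ∨ x i = 1) → (∀ i, y i = 0 ∨ y i = 1) →
      f x + f y ≤ f (fun i => max (x i) (y i)) + f (fun i => min (x i) (y i)))
    (P : Measure (Fin m → ℝ)) (hprob : IsProbabilityMeasure P)
    (hsupp : P (Set.Icc (0 : Fin m → ℝ) 1) = 1)
    (hmean : ∀ j : Fin m, ∫ y, y j ∂P = b ((j : ℕ) + 1)) :
    ∫ y, f y ∂P ≤ ∑ k ∈ Finset.range (m + 1), (b k - b (k + 1)) * f (ρ k) := by
  have hcompl : P (Set.Icc (0 : Fin m → ℝ) 1)ᶜ = 0 := by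
    rw [measure_compl measurableSet_Icc (measure_ne_top P _), hsupp, measure_univ, tsub_self]
  have hmem : ∀ᵐ y ∂P, y ∈ Set.Icc (0 : Fin m → ℝ) 1 := by
    rw [ae_iff]
    exact hcompl
  have hres : P.restrict (Set.Icc (0 : Fin m → ℝ) 1) = P :=
    Measure.restrict_eq_self_of_ae_mem hmem
  have hfaesm : AEStronglyMeasurable f P := by
    have := (hcont.aemeasurable (μ := P) measurableSet_Icc)
    rw [hres] at this
    exact this.aestronglyMeasurable
  obtain ⟨C, hC⟩ := isCompact_Icc.exists_bound_of_continuousOn hcont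
  have hfint : Integrable f P := by
    refine Integrable.mono' (integrable_const C) hfaesm ?_
    filter_upwards [hmem] with y hy
    exact hC y hy
  have hcoord_int : ∀ j : Fin m, Integrable (fun y : Fin m → ℝ => y j) P := by
    intro j
    refine Integrable.mono' (integrable_const 1) ((measurable_pi_apply j).aestronglyMeasurable) ?_
    filter_upwards [hmem] with y hy
    have h0 : (0:ℝ) ≤ y j := by simpa using hy.1 j
    have h1 : y j ≤ 1 := by simpa using hy.2 j
    rw [Real.norm_eq_abs, abs_le]
    constructor <;> linarith
  set L : (Fin m → ℝ) → ℝ :=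
    fun y => f (ρ 0) + ∑ j : Fin m, (f (ρ ((j:ℕ)+1)) - f (ρ (j:ℕ))) * y j with hL
  have hLint : Integrable L P := by
    apply Integrable.add (integrable_const _)
    apply integrable_finset_sum
    intro j _
    exact (hcoord_int j).const_mul _
  have hfL : ∀ᵐ y ∂P, f y ≤ L y := by
    filter_upwards [hmem] with y hy
    exact aux_pointwise m ρ hρ f hconv hsuper y hy
  calc ∫ y, f y ∂P ≤ ∫ y, L y ∂P := integral_mono_ae hfint hLint hfL
    _ = f (ρ 0) + ∑ j : Fin m, (f (ρ ((j:ℕ)+1)) - f (ρ (j:ℕ))) * b ((j:ℕ)+1) := by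
        rw [hL, integral_add (integrable_const _) (integrable_finset_sum _
          (fun j _ => (hcoord_int j).const_mul _)), integral_const, probReal_univ,
          one_smul, integral_finset_sum _
          (fun j _ => (hcoord_int j).const_mul _)]
        congr 1
        refine Finset.sum_congr rfl fun j _ => ?_
        rw [integral_const_mul, hmean j]
    _ = ∑ k ∈ Finset.range (m + 1), (b k - b (k + 1)) * f (ρ k) := by
        rw [aux_V_eq m b hb0 hbtop (fun k => f (ρ k))]

lemma aux_mem_measure (m : ℕ) (b : ℕ → ℝ) (hb0 : b 0 = 1) (hbtop : b (m + 1) = 0)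
    (hb : ∀ i, 1 ≤ i → i ≤ m → 0 < b i ∧ b i < 1)
    (hmono : ∀ i, 1 ≤ i → i < m → b (i + 1) ≤ b i)
    (ρ : ℕ → Fin m → ℝ)
    (hρ : ∀ j i, ρ j i = if (i : ℕ) + 1 ≤ j then 1 else 0)
    (f : (Fin m → ℝ) → ℝ) :
    ∃ P : Measure (Fin m → ℝ),
        IsProbabilityMeasure P ∧
        P (Set.Icc (0 : Fin m → ℝ) 1) = 1 ∧
        (∀ j : Fin m, ∫ y, y j ∂P = b ((j : ℕ) + 1)) ∧
        (∑ k ∈ Finset.range (m + 1), (b k - b (k + 1)) * f (ρ k)) = ∫ y, f y ∂P := by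
  have hw := aux_w_nonneg m b hb0 hbtop hb hmono
  refine ⟨∑ k ∈ Finset.range (m+1), (ENNReal.ofReal (b k - b (k+1))) • Measure.dirac (ρ k),
    ?_, ?_, ?_, ?_⟩
  · constructor
    rw [Measure.finset_sum_apply]
    have : ∀ k ∈ Finset.range (m+1),
        ((ENNReal.ofReal (b k - b (k+1))) • Measure.dirac (ρ k)) Set.univ
          = ENNReal.ofReal (b k - b (k+1)) := by
      intro k _
      simp [Measure.smul_apply, smul_eq_mul]
    rw [Finset.sum_congr rfl this, ← ENNReal.ofReal_sum_of_nonneg hw,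
      aux_w_sum m b hb0 hbtop]
    exact ENNReal.ofReal_one
  · rw [Measure.finset_sum_apply]
    have : ∀ k ∈ Finset.range (m+1),
        ((ENNReal.ofReal (b k - b (k+1))) • Measure.dirac (ρ k))
          (Set.Icc (0 : Fin m → ℝ) 1) = ENNReal.ofReal (b k - b (k+1)) := by
      intro k _
      rw [Measure.smul_apply, Measure.dirac_apply_of_mem (aux_rho_mem m ρ hρ k), smul_eq_mul, mul_one]
    rw [Finset.sum_congr rfl this, ← ENNReal.ofReal_sum_of_nonneg hw,
      aux_w_sum m b hb0 hbtop]
    exact ENNReal.ofReal_one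
  · intro j
    rw [integral_finset_sum_measure (fun k _ => aux_integrable_dirac_smul m _ _ _)]
    rw [Finset.sum_congr rfl (fun k hk =>
      aux_integral_dirac_smul m (fun y => y j) (ρ k) _ (hw k hk))]
    have : ∀ k ∈ Finset.range (m+1), (b k - b (k+1)) * ρ k j
        = (b k - b (k+1)) * (if (j:ℕ) + 1 ≤ k then (1:ℝ) else 0) := by
      intro k _
      rw [hρ]
    rw [Finset.sum_congr rfl this, aux_tel b (m+1) (j:ℕ) (by omega), hbtop, sub_zero]
  · rw [integral_finset_sum_measure (fun k _ => aux_integrable_dirac_smul m _ _ _)]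
    exact (Finset.sum_congr rfl (fun k hk =>
      aux_integral_dirac_smul m f (ρ k) _ (hw k hk))).symm


lemma aux_finmeas (m : ℕ) :
    IsFiniteMeasure (volume.restrict (Set.Icc (0 : Fin m → ℝ) 1)) := by
  constructor
  rw [Measure.restrict_apply_univ]
  exact isCompact_Icc.measure_lt_top

lemma aux_upper_density (m : ℕ) (b : ℕ → ℝ) (hb0 : b 0 = 1) (hbtop : b (m + 1) = 0)
    (ρ : ℕ → Fin m → ℝ)
    (hρ : ∀ j i, ρ j i = if (i : ℕ) + 1 ≤ j then 1 else 0)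
    (f : (Fin m → ℝ) → ℝ)
    (hcont : ContinuousOn f (Set.Icc (0 : Fin m → ℝ) 1))
    (hconv : ConvexOn ℝ (Set.Icc (0 : Fin m → ℝ) 1) f)
    (hsuper : ∀ x y : Fin m → ℝ,
      (∀ i, x i = 0 ∨ x i = 1) → (∀ i, y i = 0 ∨ y i = 1) →
      f x + f y ≤ f (fun i => max (x i) (y i)) + f (fun i => min (x i) (y i)))
    (p : (Fin m → ℝ) → ℝ) (hpm : Measurable p)
    (hpos : ∀ᵐ y ∂(volume.restrict (Set.Icc (0 : Fin m → ℝ) 1)), 0 < p y)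
    (hint1 : (∫ y, p y ∂(volume.restrict (Set.Icc (0 : Fin m → ℝ) 1))) = 1)
    (hmean : ∀ j : Fin m,
      ∫ y, y j * p y ∂(volume.restrict (Set.Icc (0 : Fin m → ℝ) 1)) = b ((j : ℕ) + 1)) :
    ∫ y, f y * p y ∂(volume.restrict (Set.Icc (0 : Fin m → ℝ) 1))
      ≤ ∑ k ∈ Finset.range (m + 1), (b k - b (k + 1)) * f (ρ k) := by
  set μ01 := volume.restrict (Set.Icc (0 : Fin m → ℝ) 1) with hμ01
  haveI := aux_finmeas m
  have hpint : Integrable p μ01 := by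
    by_contra h
    rw [integral_undef h] at hint1
    norm_num at hint1
  have hae0 : ∀ᵐ y ∂μ01, 0 ≤ p y := hpos.mono fun y hy => hy.le
  have hmemae : ∀ᵐ y ∂μ01, y ∈ Set.Icc (0 : Fin m → ℝ) 1 :=
    ae_restrict_mem measurableSet_Icc
  obtain ⟨C, hC⟩ := isCompact_Icc.exists_bound_of_continuousOn hcont
  have hfaesm : AEStronglyMeasurable f μ01 :=
    (hcont.aemeasurable measurableSet_Icc).aestronglyMeasurable
  have hfp_int : Integrable (fun y => f y * p y) μ01 := by
    refine hpint.bdd_mul (c := C) hfaesm ?_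
    filter_upwards [hmemae] with y hy using hC y hy
  have hyp_int : ∀ j : Fin m, Integrable (fun y : Fin m → ℝ => y j * p y) μ01 := by
    intro j
    refine hpint.bdd_mul (c := 1) ((measurable_pi_apply j).aestronglyMeasurable) ?_
    filter_upwards [hmemae] with y hy
    have h0 : (0:ℝ) ≤ y j := by simpa using hy.1 j
    have h1 : y j ≤ 1 := by simpa using hy.2 j
    rw [Real.norm_eq_abs, abs_le]
    constructor <;> linarith
  set Δ : Fin m → ℝ := fun j => f (ρ ((j:ℕ)+1)) - f (ρ (j:ℕ)) with hΔ
  set L : (Fin m → ℝ) → ℝ := fun y => f (ρ 0) + ∑ j : Fin m, Δ j * y j with hL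
  have hLpexp : (fun y => L y * p y)
      = fun y => f (ρ 0) * p y + ∑ j : Fin m, Δ j * (y j * p y) := by
    funext y
    rw [hL]
    simp only [add_mul, Finset.sum_mul]
    congr 1
    exact Finset.sum_congr rfl fun j _ => by ring
  have hLp_int : Integrable (fun y => L y * p y) μ01 := by
    rw [hLpexp]
    exact (hpint.const_mul _).add
      (integrable_finset_sum _ fun j _ => ((hyp_int j).const_mul _))
  have hae_le : ∀ᵐ y ∂μ01, f y * p y ≤ L y * p y := by
    filter_upwards [hmemae, hae0] with y hy hp
    exact mul_le_mul_of_nonneg_right (aux_pointwise m ρ hρ f hconv hsuper y hy) hp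
  calc ∫ y, f y * p y ∂μ01 ≤ ∫ y, L y * p y ∂μ01 := integral_mono_ae hfp_int hLp_int hae_le
    _ = f (ρ 0) + ∑ j : Fin m, Δ j * b ((j:ℕ)+1) := by
        rw [hLpexp, integral_add (hpint.const_mul _)
          (integrable_finset_sum _ fun j _ => ((hyp_int j).const_mul _)),
          integral_const_mul, hint1, mul_one,
          integral_finset_sum _ (fun j _ => ((hyp_int j).const_mul _))]
        congr 1
        exact Finset.sum_congr rfl fun j _ => by rw [integral_const_mul, hmean j]
    _ = ∑ k ∈ Finset.range (m + 1), (b k - b (k + 1)) * f (ρ k) := by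
        rw [aux_V_eq m b hb0 hbtop (fun k => f (ρ k))]


lemma aux_approx (m : ℕ) (b : ℕ → ℝ) (hb0 : b 0 = 1) (hbtop : b (m + 1) = 0)
    (hb : ∀ i, 1 ≤ i → i ≤ m → 0 < b i ∧ b i < 1)
    (hmono : ∀ i, 1 ≤ i → i < m → b (i + 1) ≤ b i)
    (ρ : ℕ → Fin m → ℝ)
    (hρ : ∀ j i, ρ j i = if (i : ℕ) + 1 ≤ j then 1 else 0)
    (f : (Fin m → ℝ) → ℝ)
    (hcont : ContinuousOn f (Set.Icc (0 : Fin m → ℝ) 1))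
    (hnonneg : ∀ y ∈ Set.Icc (0 : Fin m → ℝ) 1, 0 ≤ f y)
    (ε' : ℝ) (hε' : 0 < ε') :
    ∃ p : (Fin m → ℝ) → ℝ,
        Measurable p ∧
        (∀ᵐ y ∂(volume.restrict (Set.Icc (0 : Fin m → ℝ) 1)), 0 < p y) ∧
        (∫ y, p y ∂(volume.restrict (Set.Icc (0 : Fin m → ℝ) 1))) = 1 ∧
        (∀ j : Fin m,
          ∫ y, y j * p y ∂(volume.restrict (Set.Icc (0 : Fin m → ℝ) 1)) =
            b ((j : ℕ) + 1)) ∧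
        (∑ k ∈ Finset.range (m + 1), (b k - b (k + 1)) * f (ρ k)) - ε'
          < ∫ y, f y * p y ∂(volume.restrict (Set.Icc (0 : Fin m → ℝ) 1)) := by
  classical
  set μ01 := volume.restrict (Set.Icc (0 : Fin m → ℝ) 1) with hμ01
  haveI := aux_finmeas m
  set w : ℕ → ℝ := fun k => b k - b (k+1) with hwdef
  have hw : ∀ k ∈ Finset.range (m+1), 0 ≤ w k := aux_w_nonneg m b hb0 hbtop hb hmono
  have hwsum : ∑ k ∈ Finset.range (m+1), w k = 1 := aux_w_sum m b hb0 hbtop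
  set V : ℝ := ∑ k ∈ Finset.range (m + 1), w k * f (ρ k) with hVdef
  have hVnn : 0 ≤ V :=
    Finset.sum_nonneg fun k hk =>
      mul_nonneg (hw k hk) (hnonneg _ (aux_rho_mem m ρ hρ k))
  -- uniform continuity
  have huc := (isCompact_Icc.uniformContinuousOn_of_continuous hcont)
  rw [Metric.uniformContinuousOn_iff] at huc
  obtain ⟨γ, hγ, hγ'⟩ := huc (ε'/2) (by positivity)
  -- bounds on b
  have hbj : ∀ j : Fin m, 0 < b ((j:ℕ)+1) ∧ b ((j:ℕ)+1) < 1 :=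
    fun j => hb _ (by omega) (by omega)
  -- choice of ε
  set T : Finset ℝ := insert (1/3 : ℝ)
    (Finset.image (fun j : Fin m => min (b ((j:ℕ)+1)) (1 - b ((j:ℕ)+1))) Finset.univ) with hT
  have hTne : T.Nonempty := ⟨1/3, Finset.mem_insert_self _ _⟩
  set εb := T.min' hTne with hεb
  have hεb_pos : 0 < εb := by
    rw [hεb, Finset.lt_min'_iff]
    intro y hy
    rw [hT, Finset.mem_insert] at hy
    rcases hy with rfl | hy
    · norm_num
    · obtain ⟨j, _, rfl⟩ := Finset.mem_image.1 hy
      exact lt_min (hbj j).1 (by linarith [(hbj j).2])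
  have hεb13 : εb ≤ 1/3 := Finset.min'_le _ _ (Finset.mem_insert_self _ _)
  have hεbj : ∀ j : Fin m, εb ≤ b ((j:ℕ)+1) ∧ εb ≤ 1 - b ((j:ℕ)+1) := by
    intro j
    have := Finset.min'_le T _ (Finset.mem_insert_of_mem
      (Finset.mem_image_of_mem _ (Finset.mem_univ j)))
    rw [← hεb] at this
    exact ⟨this.trans (min_le_left _ _), this.trans (min_le_right _ _)⟩
  set ε := min εb (min (γ/3) (ε'/(2*(V+1)))) with hε
  have hεpos : 0 < ε := by
    apply lt_min hεb_pos
    apply lt_min (by positivity)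
    positivity
  have hε13 : ε ≤ 1/3 := (min_le_left _ _).trans hεb13
  have hεγ : ε ≤ γ/3 := (min_le_right _ _).trans (min_le_left _ _)
  have hεV : ε ≤ ε'/(2*(V+1)) := (min_le_right _ _).trans (min_le_right _ _)
  have hεj : ∀ j : Fin m, ε ≤ b ((j:ℕ)+1) ∧ ε ≤ 1 - b ((j:ℕ)+1) :=
    fun j => ⟨(min_le_left _ _).trans (hεbj j).1, (min_le_left _ _).trans (hεbj j).2⟩
  set η := ε^2 with hη
  have hηpos : 0 < η := by positivity
  have hηε : η ≤ ε := by nlinarith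
  have hη1 : η < 1 := by nlinarith
  have h1η : (0:ℝ) < 1 - η := by linarith
  -- the shift s
  set sh : Fin m → ℝ := fun j => (b ((j:ℕ)+1) - η/2)/(1-η) - (1-ε) * b ((j:ℕ)+1) with hsh
  have hs : ∀ j : Fin m, 0 < sh j ∧ sh j < ε := by
    intro j
    obtain ⟨hb1, hb2⟩ := hbj j
    obtain ⟨he1, he2⟩ := hεj j
    have hrw : sh j = ((b ((j:ℕ)+1) - η/2) - (1-η)*(1-ε)*b ((j:ℕ)+1))/(1-η) := by
      rw [hsh]
      field_simp
    constructor
    · rw [hrw]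
      apply div_pos _ h1η
      nlinarith [hη, mul_le_mul_of_nonneg_right he1 hεpos.le,
        mul_nonneg (mul_nonneg hb1.le hηpos.le) (by linarith : (0:ℝ) ≤ 1 - ε)]
    · rw [hrw, div_lt_iff₀ h1η]
      nlinarith [hη, mul_le_mul_of_nonneg_right he2 hεpos.le,
        mul_lt_mul_of_pos_right hb2 hηpos, mul_nonneg hηpos.le hεpos.le,
        mul_le_mul_of_nonneg_left hε13 hηpos.le]
  -- the boxes
  set A : ℕ → Fin m → ℝ :=
    fun k j => if (j:ℕ)+1 ≤ k then 1 - 2*(ε - sh j) else 0 with hA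
  set Cc : ℕ → Fin m → ℝ :=
    fun k j => if (j:ℕ)+1 ≤ k then 1 else 2 * sh j with hCc
  have hAC : ∀ k (j : Fin m), A k j < Cc k j := by
    intro k j
    obtain ⟨h1, h2⟩ := hs j
    by_cases h : (j:ℕ)+1 ≤ k <;> simp only [hA, hCc, if_pos, if_neg, h, if_true, if_false] <;> linarith
  have hsub : ∀ k, Set.Icc (A k) (Cc k) ⊆ Set.Icc (0 : Fin m → ℝ) 1 := by
    intro k
    apply Set.Icc_subset_Icc <;> rw [Pi.le_def] <;> intro j <;> obtain ⟨h1, h2⟩ := hs j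
    · by_cases h : (j:ℕ)+1 ≤ k <;>
        simp only [hA, if_pos, if_neg, h, if_true, if_false, Pi.zero_apply] <;> linarith
    · by_cases h : (j:ℕ)+1 ≤ k <;>
        simp only [hCc, if_pos, if_neg, h, if_true, if_false, Pi.one_apply] <;> linarith
  have hlt01 : ∀ i : Fin m, (0 : Fin m → ℝ) i < (1 : Fin m → ℝ) i := by
    intro i; simp
  have hsub01 : Set.Icc (0 : Fin m → ℝ) 1 ⊆ Set.Icc (0 : Fin m → ℝ) 1 := subset_rfl
  -- the density
  set p : (Fin m → ℝ) → ℝ := fun y =>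
    (∑ k ∈ Finset.range (m+1), ((1-η) * w k) * boxD m (A k) (Cc k) y)
      + η * boxD m (0 : Fin m → ℝ) 1 y with hp
  have hpm : Measurable p := by
    apply Measurable.add
    · apply Finset.measurable_sum
      intro k _
      exact (boxD_measurable m (A k) (Cc k)).const_mul _
    · exact (boxD_measurable m _ _).const_mul _
  -- splitting of integrals
  have hsplit : ∀ g : (Fin m → ℝ) → ℝ, AEStronglyMeasurable g μ01 →
      ∀ Cg : ℝ, (∀ y ∈ Set.Icc (0 : Fin m → ℝ) 1, ‖g y‖ ≤ Cg) →
      ∫ y, g y * p y ∂μ01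
        = (∑ k ∈ Finset.range (m+1),
            ((1-η) * w k) * ∫ y, g y * boxD m (A k) (Cc k) y ∂μ01)
          + η * ∫ y, g y * boxD m (0 : Fin m → ℝ) 1 y ∂μ01 := by
    intro g hg Cg hCg
    have hint_box : ∀ (a c : Fin m → ℝ), (∀ i, a i < c i) →
        Integrable (fun y => g y * boxD m a c y) μ01 := by
      intro a c hlt
      have hbD : Integrable (boxD m a c) μ01 := by
        refine Integrable.mono' (integrable_const ((∏ i, (c i - a i))⁻¹))
          (boxD_measurable m a c).aestronglyMeasurable ?_
        refine Filter.Eventually.of_forall fun y => ?_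
        rw [Real.norm_eq_abs, abs_of_nonneg (boxD_nonneg m a c hlt y)]
        exact boxD_le m a c hlt y
      refine hbD.bdd_mul (c := Cg) hg ?_
      filter_upwards [ae_restrict_mem measurableSet_Icc] with y hy using hCg y hy
    have hexp : (fun y => g y * p y)
        = fun y => (∑ k ∈ Finset.range (m+1),
            ((1-η) * w k) * (g y * boxD m (A k) (Cc k) y))
          + η * (g y * boxD m (0 : Fin m → ℝ) 1 y) := by
      funext y
      rw [hp]
      simp only [mul_add, Finset.mul_sum]
      congr 1
      · exact Finset.sum_congr rfl fun k _ => by ring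
      · ring
    rw [hexp, integral_add
      (integrable_finset_sum _ fun k _ => ((hint_box (A k) (Cc k) (hAC k)).const_mul _))
      ((hint_box _ _ hlt01).const_mul _),
      integral_finset_sum _ (fun k _ => ((hint_box (A k) (Cc k) (hAC k)).const_mul _)),
      integral_const_mul]
    congr 1
    exact Finset.sum_congr rfl fun k _ => integral_const_mul _ _
  -- total mass one
  have hmass : (∫ y, p y ∂μ01) = 1 := by
    have h1 : (fun y : Fin m → ℝ => p y) = fun y => (1:ℝ) * p y := by
      funext y; rw [one_mul]
    rw [h1, hsplit (fun _ => 1) aestronglyMeasurable_const 1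
      (fun y _ => by rw [Real.norm_eq_abs]; norm_num)]
    have h2 : ∀ k ∈ Finset.range (m+1),
        ((1-η) * w k) * ∫ y, (1:ℝ) * boxD m (A k) (Cc k) y ∂μ01 = (1-η) * w k := by
      intro k _
      have : (fun y : Fin m → ℝ => (1:ℝ) * boxD m (A k) (Cc k) y)
          = boxD m (A k) (Cc k) := by funext y; rw [one_mul]
      rw [this, boxD_int_one m (A k) (Cc k) (hAC k) (hsub k), mul_one]
    rw [Finset.sum_congr rfl h2]
    have h3 : (fun y : Fin m → ℝ => (1:ℝ) * boxD m (0 : Fin m → ℝ) 1 y)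
        = boxD m (0 : Fin m → ℝ) 1 := by funext y; rw [one_mul]
    rw [h3, boxD_int_one m _ _ hlt01 hsub01, mul_one, ← Finset.mul_sum, hwsum, mul_one]
    ring
  -- means
  have hmean : ∀ j : Fin m, (∫ y, y j * p y ∂μ01) = b ((j:ℕ)+1) := by
    intro j
    rw [hsplit (fun y => y j) (measurable_pi_apply j).aestronglyMeasurable 1 ?hbd]
    case hbd =>
      intro y hy
      have h0 : (0:ℝ) ≤ y j := by simpa using hy.1 j
      have h1 : y j ≤ 1 := by simpa using hy.2 j
      rw [Real.norm_eq_abs, abs_le]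
      constructor <;> linarith
    have h2 : ∀ k ∈ Finset.range (m+1),
        ((1-η) * w k) * ∫ y, y j * boxD m (A k) (Cc k) y ∂μ01
          = ((1-η) * w k) * ((1-ε) * (if (j:ℕ)+1 ≤ k then (1:ℝ) else 0) + sh j) := by
      intro k _
      rw [boxD_int_coord m (A k) (Cc k) (hAC k) (hsub k) j]
      congr 1
      by_cases h : (j:ℕ)+1 ≤ k <;> simp only [hA, hCc, if_pos, if_neg, h, if_true, if_false] <;> ring
    rw [Finset.sum_congr rfl h2, boxD_int_coord m _ _ hlt01 hsub01 j]
    have h3 : ∀ k ∈ Finset.range (m+1),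
        ((1-η) * w k) * ((1-ε) * (if (j:ℕ)+1 ≤ k then (1:ℝ) else 0) + sh j)
          = ((1-η)*(1-ε)) * (w k * (if (j:ℕ)+1 ≤ k then (1:ℝ) else 0))
            + ((1-η) * sh j) * w k := by
      intro k _
      ring
    rw [Finset.sum_congr rfl h3, Finset.sum_add_distrib, ← Finset.mul_sum, ← Finset.mul_sum]
    have htel : ∑ k ∈ Finset.range (m+1), w k * (if (j:ℕ)+1 ≤ k then (1:ℝ) else 0)
        = b ((j:ℕ)+1) := by
      rw [hwdef]
      rw [aux_tel b (m+1) (j:ℕ) (by omega), hbtop, sub_zero]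
    rw [htel, hwsum, mul_one]
    have hmid0 : ((0 : Fin m → ℝ) j + (1 : Fin m → ℝ) j)/2 = 1/2 := by simp
    rw [hmid0, hsh]
    field_simp
    ring
  -- positivity
  have hppos : ∀ᵐ y ∂μ01, 0 < p y := by
    filter_upwards [ae_restrict_mem measurableSet_Icc] with y hy
    have hsum0 : 0 ≤ ∑ k ∈ Finset.range (m+1), ((1-η) * w k) * boxD m (A k) (Cc k) y :=
      Finset.sum_nonneg fun k hk =>
        mul_nonneg (mul_nonneg (by linarith) (hw k hk)) (boxD_nonneg m _ _ (hAC k) y)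
    have htop : boxD m (0 : Fin m → ℝ) 1 y = 1 := by
      unfold boxD
      rw [Set.indicator_of_mem hy]
      simp
    have hpy : p y = (∑ k ∈ Finset.range (m+1), ((1-η) * w k) * boxD m (A k) (Cc k) y)
        + η * boxD m (0 : Fin m → ℝ) 1 y := rfl
    rw [hpy, htop]
    linarith
  -- value of f-integral
  refine ⟨p, hpm, hppos, hmass, hmean, ?_⟩
  obtain ⟨Cf, hCf⟩ := isCompact_Icc.exists_bound_of_continuousOn hcont
  have hfaesm : AEStronglyMeasurable f μ01 :=
    (hcont.aemeasurable measurableSet_Icc).aestronglyMeasurable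
  rw [hsplit f hfaesm Cf hCf]
  have hIk : ∀ k ∈ Finset.range (m+1),
      f (ρ k) - ε'/2 ≤ ∫ y, f y * boxD m (A k) (Cc k) y ∂μ01 := by
    intro k _
    have hδ : ∀ y ∈ Set.Icc (A k) (Cc k), |f y - f (ρ k)| ≤ ε'/2 := by
      intro y hy
      have hyI : y ∈ Set.Icc (0 : Fin m → ℝ) 1 := hsub k hy
      have hρI : ρ k ∈ Set.Icc (0 : Fin m → ℝ) 1 := aux_rho_mem m ρ hρ k
      have hdist : dist y (ρ k) < γ := by
        rw [dist_pi_lt_iff hγ]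
        intro i
        rw [Real.dist_eq, hρ]
        obtain ⟨hs1, hs2⟩ := hs i
        have hyl := hy.1 i
        have hyu := hy.2 i
        by_cases h : (i:ℕ)+1 ≤ k
        · simp only [hA, if_pos h] at hyl
          simp only [hCc, if_pos h] at hyu
          rw [if_pos h, abs_lt]
          constructor <;> linarith [hεγ]
        · simp only [hA, if_neg h] at hyl
          simp only [hCc, if_neg h] at hyu
          rw [if_neg h, abs_lt]
          constructor <;> linarith [hεγ]
      have := hγ' y hyI (ρ k) hρI hdist
      rw [Real.dist_eq] at this
      exact this.le
    have := boxD_int_f m (A k) (Cc k) (hAC k) (hsub k) f hcont (ρ k) (ε'/2) hδ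
    rw [abs_le] at this
    linarith [this.1]
  have hItop : 0 ≤ ∫ y, f y * boxD m (0 : Fin m → ℝ) 1 y ∂μ01 := by
    apply integral_nonneg_of_ae
    filter_upwards [ae_restrict_mem measurableSet_Icc] with y hy
    exact mul_nonneg (hnonneg y hy) (boxD_nonneg m _ _ hlt01 y)
  have hsumlb : ∑ k ∈ Finset.range (m+1),
      ((1-η) * w k) * (f (ρ k) - ε'/2)
      ≤ ∑ k ∈ Finset.range (m+1),
        ((1-η) * w k) * ∫ y, f y * boxD m (A k) (Cc k) y ∂μ01 := by
    apply Finset.sum_le_sum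
    intro k hk
    exact mul_le_mul_of_nonneg_left (hIk k hk) (mul_nonneg (by linarith) (hw k hk))
  have hexpand : ∑ k ∈ Finset.range (m+1), ((1-η) * w k) * (f (ρ k) - ε'/2)
      = (1-η) * (V - ε'/2) := by
    have : ∀ k ∈ Finset.range (m+1), ((1-η) * w k) * (f (ρ k) - ε'/2)
        = (1-η) * (w k * f (ρ k)) - ((1-η) * (ε'/2)) * w k := by
      intro k _; ring
    rw [Finset.sum_congr rfl this, Finset.sum_sub_distrib, ← Finset.mul_sum, ← Finset.mul_sum,
      hwsum, ← hVdef]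
    ring
  have hfinal : V - ε' < (1-η) * (V - ε'/2) := by
    have hεV' : ε * (2*(V+1)) ≤ ε' := by
      rw [← le_div_iff₀ (by positivity)]
      exact hεV
    nlinarith
  have hVsum : V = ∑ k ∈ Finset.range (m + 1), (b k - b (k + 1)) * f (ρ k) := rfl
  calc (∑ k ∈ Finset.range (m + 1), (b k - b (k + 1)) * f (ρ k)) - ε'
      = V - ε' := by rw [hVsum]
    _ < (1-η) * (V - ε'/2) := hfinal
    _ ≤ (∑ k ∈ Finset.range (m+1),
          ((1-η) * w k) * ∫ y, f y * boxD m (A k) (Cc k) y ∂μ01)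
        + η * ∫ y, f y * boxD m (0 : Fin m → ℝ) 1 y ∂μ01 := by
        rw [← hexpand]
        have := mul_nonneg hηpos.le hItop
        linarith [hsumlb]


end OneStepAux

section
/-- for `f : [0,1]^m → ℝ` continuous, convex, nonnegative, with
supermodular restriction to the vertices, and `b ∈ (0,1)^m` nonincreasing, the
supremum over non-degenerate mean-`b` densities of `∫ f p dμ` equals
`Σ_k (b_k − b_{k+1}) f(ρ_k)`, and this value is the maximum of `E_P f` over all
Borel probability measures `P` on the cube with barycenter `b`. -/
theorem one_step_max
    (m : ℕ) (b : ℕ → ℝ)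
    (hb0 : b 0 = 1) (hbtop : b (m + 1) = 0)
    (hb : ∀ i, 1 ≤ i → i ≤ m → 0 < b i ∧ b i < 1)
    (hmono : ∀ i, 1 ≤ i → i < m → b (i + 1) ≤ b i)
    (ρ : ℕ → Fin m → ℝ)
    (hρ : ∀ j i, ρ j i = if (i : ℕ) + 1 ≤ j then 1 else 0)
    (f : (Fin m → ℝ) → ℝ)
    (hcont : ContinuousOn f (Set.Icc (0 : Fin m → ℝ) 1))
    (hconv : ConvexOn ℝ (Set.Icc (0 : Fin m → ℝ) 1) f)
    (hnonneg : ∀ y ∈ Set.Icc (0 : Fin m → ℝ) 1, 0 ≤ f y)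
    (hsuper : ∀ x y : Fin m → ℝ,
      (∀ i, x i = 0 ∨ x i = 1) → (∀ i, y i = 0 ∨ y i = 1) →
      f x + f y ≤ f (fun i => max (x i) (y i)) + f (fun i => min (x i) (y i))) :
    sSup {r : ℝ | ∃ p : (Fin m → ℝ) → ℝ,
        Measurable p ∧
        (∀ᵐ y ∂(volume.restrict (Set.Icc (0 : Fin m → ℝ) 1)), 0 < p y) ∧
        (∫ y, p y ∂(volume.restrict (Set.Icc (0 : Fin m → ℝ) 1))) = 1 ∧
        (∀ j : Fin m,
          ∫ y, y j * p y ∂(volume.restrict (Set.Icc (0 : Fin m → ℝ) 1)) =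
            b ((j : ℕ) + 1)) ∧
        r = ∫ y, f y * p y ∂(volume.restrict (Set.Icc (0 : Fin m → ℝ) 1))}
      = ∑ k ∈ Finset.range (m + 1), (b k - b (k + 1)) * f (ρ k) ∧
    IsGreatest {r : ℝ | ∃ P : Measure (Fin m → ℝ),
        IsProbabilityMeasure P ∧
        P (Set.Icc (0 : Fin m → ℝ) 1) = 1 ∧
        (∀ j : Fin m, ∫ y, y j ∂P = b ((j : ℕ) + 1)) ∧
        r = ∫ y, f y ∂P}
      (∑ k ∈ Finset.range (m + 1), (b k - b (k + 1)) * f (ρ k)) := by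
  constructor
  · apply csSup_eq_of_forall_le_of_forall_lt_exists_gt
    · obtain ⟨p, h1, h2, h3, h4, _⟩ :=
        aux_approx m b hb0 hbtop hb hmono ρ hρ f hcont hnonneg 1 one_pos
      exact ⟨_, ⟨p, h1, h2, h3, h4, rfl⟩⟩
    · rintro r ⟨p, h1, h2, h3, h4, rfl⟩
      exact aux_upper_density m b hb0 hbtop ρ hρ f hcont hconv hsuper p h1 h2 h3 h4
    · intro x hx
      obtain ⟨p, h1, h2, h3, h4, h5⟩ :=
        aux_approx m b hb0 hbtop hb hmono ρ hρ f hcont hnonneg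
          ((∑ k ∈ Finset.range (m + 1), (b k - b (k + 1)) * f (ρ k)) - x) (by linarith)
      exact ⟨_, ⟨p, h1, h2, h3, h4, rfl⟩, by linarith⟩
  · constructor
    · obtain ⟨P, h1, h2, h3, h4⟩ := aux_mem_measure m b hb0 hbtop hb hmono ρ hρ f
      exact ⟨P, h1, h2, h3, h4⟩
    · rintro r ⟨P, h1, h2, h3, rfl⟩
      exact aux_upper_measure m b hb0 hbtop ρ hρ f hcont hconv hsuper P h1 h2 h3
end
end

section
/- n-fold approximation: let b ∈ (0,1)^m, q a finitely supported probability measure on Ω = [0,1]^m with barycenter b, and f : Ω^n → ℝ continuous nonnegative. Then for every ε > 0 and 0 ≤ k ≤ n there exists an (L,b)-stable positive-a.e. density P on Ω^n such that |E_P(f | L^1,...,L^k)(ω^1,...,ω^k) − E_{q^{⊗(n−k)}}(f(ω^1,...,ω^k, ·))| < ε for all (ω^1,...,ω^k) ∈ Ω^k. -/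
open MeasureTheory

/-- Marginal density over the coordinate set `S` for densities on `Ω^n`,
`Ω = [0,1]^m`. -/
noncomputable def margC (n m : ℕ) (p : (Fin n → Fin m → ℝ) → ℝ)
    (S : Finset (Fin n)) (x : Fin n → Fin m → ℝ) : ℝ :=
  ∫ τ : {i : Fin n // i ∉ S} → (Fin m → ℝ),
    p (fun i => if h : i ∈ S then x i else τ ⟨i, h⟩)
    ∂(Measure.pi fun _ : {i : Fin n // i ∉ S} =>
        volume.restrict (Set.Icc (0 : Fin m → ℝ) 1))

/-- Conditional expectation `E_p(f | (L^i)_{i ∈ S} = (x_i)_{i ∈ S})`. -/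
noncomputable def condC (n m : ℕ) (p f : (Fin n → Fin m → ℝ) → ℝ)
    (S : Finset (Fin n)) (x : Fin n → Fin m → ℝ) : ℝ :=
  ∫ τ : {i : Fin n // i ∉ S} → (Fin m → ℝ),
    f (fun i => if h : i ∈ S then x i else τ ⟨i, h⟩) *
      (p (fun i => if h : i ∈ S then x i else τ ⟨i, h⟩) / margC n m p S x)
    ∂(Measure.pi fun _ : {i : Fin n // i ∉ S} =>
        volume.restrict (Set.Icc (0 : Fin m → ℝ) 1))

/-- `(L,b)`-stability. -/
def LbStable (n m : ℕ) (b : Fin m → ℝ) (p : (Fin n → Fin m → ℝ) → ℝ) : Prop :=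
  ∀ k : Fin n,
    ∀ᵐ x ∂(Measure.pi fun _ : Fin n =>
        volume.restrict (Set.Icc (0 : Fin m → ℝ) 1)),
      ∀ j : Fin m, condC n m p (fun y => y k j) (Finset.Iio k) x = b j



section AuxHelpers

open Set

lemma pi_restrict_eq {ι : Type*} [Fintype ι] {α : ι → Type*} [∀ i, MeasurableSpace (α i)]
    (μ : ∀ i, Measure (α i)) [∀ i, SigmaFinite (μ i)] (s : ∀ i, Set (α i))
    (hs : ∀ i, MeasurableSet (s i)) :
    (Measure.pi μ).restrict (Set.pi univ s) = Measure.pi (fun i => (μ i).restrict (s i)) := by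
  haveI : ∀ i, SigmaFinite ((μ i).restrict (s i)) := fun i => inferInstance
  refine (Measure.pi_eq fun t ht => ?_).symm
  rw [Measure.restrict_apply (MeasurableSet.univ_pi ht), ← Set.pi_inter_distrib,
    Measure.pi_pi]
  simp_rw [Measure.restrict_apply (ht _)]

lemma integral_pi_prod' {ι : Type*} [Fintype ι] {E : Type*} [MeasurableSpace E]
    (μ : Measure E) [SigmaFinite μ] (g : ι → E → ℝ) :
    ∫ x : ι → E, ∏ i, g i (x i) ∂(Measure.pi fun _ : ι => μ) = ∏ i, ∫ x, g i x ∂μ := by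
  letI : MeasureSpace E := { toMeasurableSpace := inferInstance, volume := μ }
  haveI : SigmaFinite (volume : Measure E) := ‹SigmaFinite μ›
  exact MeasureTheory.integral_fintype_prod_eq_prod (μ := fun _ => μ) g

/-- Integral of `h (τ t0) * ∏ i, g i (τ i)` over a product measure, when every
`g i` has integral one. -/
lemma integral_eval_mul_prod {ι : Type*} [Fintype ι] [DecidableEq ι] {E : Type*}
    [MeasurableSpace E] (μ : Measure E) [SigmaFinite μ] (h : E → ℝ) (g : ι → E → ℝ)
    (hg : ∀ i, ∫ u, g i u ∂μ = 1) (t0 : ι) :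
    ∫ τ : ι → E, h (τ t0) * ∏ i, g i (τ i) ∂(Measure.pi fun _ : ι => μ)
      = ∫ u, h u * g t0 u ∂μ := by
  have hfun : (fun τ : ι → E => h (τ t0) * ∏ i, g i (τ i))
      = fun τ => ∏ i, ((if i = t0 then h (τ i) else 1) * g i (τ i)) := by
    funext τ
    rw [Finset.prod_mul_distrib, Finset.prod_ite_eq' Finset.univ t0 (fun i => h (τ i))]
    simp
  have key := integral_pi_prod' μ (fun i u => (if i = t0 then h u else 1) * g i u)
  rw [hfun, key]
  rw [Finset.prod_eq_single_of_mem t0 (Finset.mem_univ _)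
    (fun i _ hne => by simp only [if_neg hne, one_mul]; exact hg i)]
  simp

lemma integrable_of_bdd {α : Type*} [MeasurableSpace α] {μ : Measure α} [IsFiniteMeasure μ]
    {g : α → ℝ} (hm : AEStronglyMeasurable g μ) {C : ℝ} (hb : ∀ᵐ x ∂μ, |g x| ≤ C) :
    Integrable g μ :=
  Integrable.mono' (integrable_const C) hm (by simpa [Real.norm_eq_abs] using hb)

noncomputable def bump1 (δ c : ℝ) : ℝ → ℝ := (Set.Icc (c-δ) (c+δ)).indicator fun _ => (2*δ)⁻¹

lemma bump1_nonneg {δ : ℝ} (hδ : 0 < δ) (c u : ℝ) : 0 ≤ bump1 δ c u := by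
  unfold bump1; by_cases hu : u ∈ Set.Icc (c-δ) (c+δ) <;> simp [hu] <;> positivity

lemma bump1_le {δ : ℝ} (hδ : 0 < δ) (c u : ℝ) : bump1 δ c u ≤ (2*δ)⁻¹ := by
  unfold bump1; by_cases hu : u ∈ Set.Icc (c-δ) (c+δ) <;> simp [hu] <;> positivity

lemma bump1_meas (δ c : ℝ) : Measurable (bump1 δ c) :=
  (measurable_const.indicator measurableSet_Icc)

lemma bump1_support {δ c u : ℝ} (h : bump1 δ c u ≠ 0) : |u - c| ≤ δ := by
  by_cases hu : u ∈ Set.Icc (c-δ) (c+δ)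
  · rw [abs_le]; constructor <;> [linarith [hu.1]; linarith [hu.2]]
  · exact absurd (by simp [bump1, hu]) h

lemma bump1_int {δ c : ℝ} (hδ : 0 < δ) (h0 : 0 ≤ c - δ) (h1 : c + δ ≤ 1) :
    ∫ u, bump1 δ c u ∂(volume.restrict (Set.Icc (0:ℝ) 1)) = 1 := by
  unfold bump1
  rw [integral_indicator measurableSet_Icc, Measure.restrict_restrict measurableSet_Icc,
    Set.inter_eq_left.mpr (Set.Icc_subset_Icc h0 h1)]
  rw [setIntegral_const, Real.volume_real_Icc]
  rw [max_eq_left (by linarith)]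
  have h2 : c + δ - (c - δ) = 2*δ := by ring
  rw [h2, smul_eq_mul]
  field_simp

lemma bump1_mom {δ c : ℝ} (hδ : 0 < δ) (h0 : 0 ≤ c - δ) (h1 : c + δ ≤ 1) :
    ∫ u, u * bump1 δ c u ∂(volume.restrict (Set.Icc (0:ℝ) 1)) = c := by
  unfold bump1
  have hfun : (fun u => u * (Set.Icc (c - δ) (c + δ)).indicator (fun _ => (2*δ)⁻¹) u)
      = (Set.Icc (c - δ) (c + δ)).indicator (fun u => u * (2*δ)⁻¹) := by
    funext u
    by_cases hu : u ∈ Set.Icc (c - δ) (c + δ) <;> simp [hu]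
  rw [hfun, integral_indicator measurableSet_Icc, Measure.restrict_restrict measurableSet_Icc,
    Set.inter_eq_left.mpr (Set.Icc_subset_Icc h0 h1)]
  have hmul : ∫ u in Set.Icc (c - δ) (c + δ), u * (2*δ)⁻¹ ∂volume
      = (∫ u in Set.Icc (c - δ) (c + δ), u ∂volume) * (2*δ)⁻¹ := by
    rw [integral_mul_const]
  rw [hmul]
  have hle : c - δ ≤ c + δ := by linarith
  have hid : ∫ u in Set.Icc (c - δ) (c + δ), u ∂volume = ((c+δ)^2 - (c-δ)^2)/2 := by
    rw [MeasureTheory.integral_Icc_eq_integral_Ioc, ← intervalIntegral.integral_of_le hle,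
      integral_id]
  rw [hid]
  field_simp
  ring

lemma nu_eq (m : ℕ) : volume.restrict (Set.Icc (0:Fin m → ℝ) 1)
    = Measure.pi (fun _ : Fin m => volume.restrict (Set.Icc (0:ℝ) 1)) := by
  rw [← Set.pi_univ_Icc, volume_pi,
    pi_restrict_eq _ _ (fun _ => measurableSet_Icc)]
  rfl

instance : IsProbabilityMeasure (volume.restrict (Set.Icc (0:ℝ) 1)) :=
  ⟨by simp [Real.volume_Icc]⟩

instance (m : ℕ) : IsProbabilityMeasure (volume.restrict (Set.Icc (0:Fin m → ℝ) 1)) := by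
  rw [nu_eq]; infer_instance

noncomputable def bumpP (m : ℕ) (δ : ℝ) (c : Fin m → ℝ) (y : Fin m → ℝ) : ℝ :=
  ∏ j, bump1 δ (c j) (y j)

lemma bumpP_meas (m : ℕ) (δ : ℝ) (c : Fin m → ℝ) : Measurable (bumpP m δ c) :=
  Finset.measurable_prod _ fun j _ => (bump1_meas δ (c j)).comp (measurable_pi_apply j)

lemma bumpP_nonneg {m : ℕ} {δ : ℝ} (hδ : 0 < δ) (c y : Fin m → ℝ) : 0 ≤ bumpP m δ c y :=
  Finset.prod_nonneg fun j _ => bump1_nonneg hδ _ _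

lemma bumpP_le {m : ℕ} {δ : ℝ} (hδ : 0 < δ) (c y : Fin m → ℝ) :
    bumpP m δ c y ≤ ((2*δ)⁻¹)^m := by
  have := Finset.prod_le_prod (s := Finset.univ)
    (f := fun j => bump1 δ (c j) (y j)) (g := fun _ => (2*δ)⁻¹)
    (fun j _ => bump1_nonneg hδ _ _) (fun j _ => bump1_le hδ _ _)
  simpa [bumpP] using this

lemma bumpP_support {m : ℕ} {δ : ℝ} {c y : Fin m → ℝ} (h : bumpP m δ c y ≠ 0) (j : Fin m) :
    |y j - c j| ≤ δ := by
  unfold bumpP at h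
  rw [Finset.prod_ne_zero_iff] at h
  exact bump1_support (h j (Finset.mem_univ j))

lemma bumpP_int {m : ℕ} {δ : ℝ} (hδ : 0 < δ) {c : Fin m → ℝ}
    (hin : ∀ j, 0 ≤ c j - δ ∧ c j + δ ≤ 1) :
    ∫ y, bumpP m δ c y ∂(volume.restrict (Set.Icc (0:Fin m → ℝ) 1)) = 1 := by
  unfold bumpP
  rw [nu_eq, integral_pi_prod' (volume.restrict (Set.Icc (0:ℝ) 1)) (fun j => bump1 δ (c j))]
  exact Finset.prod_eq_one fun j _ => bump1_int hδ (hin j).1 (hin j).2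

lemma moment_nu {m : ℕ} {δ : ℝ} (hδ : 0 < δ) {c : Fin m → ℝ}
    (hin : ∀ j, 0 ≤ c j - δ ∧ c j + δ ≤ 1) (j0 : Fin m) :
    ∫ y, y j0 * bumpP m δ c y ∂(volume.restrict (Set.Icc (0:Fin m → ℝ) 1)) = c j0 := by
  unfold bumpP
  rw [nu_eq]
  have key := integral_eval_mul_prod (volume.restrict (Set.Icc (0:ℝ) 1))
    (fun u : ℝ => u) (fun j => bump1 δ (c j))
    (fun j => bump1_int hδ (hin j).1 (hin j).2) j0
  rw [key]
  exact bump1_mom hδ (hin j0).1 (hin j0).2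

lemma const_int_nu (m : ℕ) :
    ∫ _y : Fin m → ℝ, (1:ℝ) ∂(volume.restrict (Set.Icc (0:Fin m → ℝ) 1)) = 1 := by
  simp

lemma eval_int_nu (m : ℕ) (j0 : Fin m) :
    ∫ y : Fin m → ℝ, y j0 ∂(volume.restrict (Set.Icc (0:Fin m → ℝ) 1)) = 1/2 := by
  rw [nu_eq]
  have key := integral_eval_mul_prod (volume.restrict (Set.Icc (0:ℝ) 1))
    (fun u : ℝ => u) (fun _ : Fin m => fun _ : ℝ => (1:ℝ)) (fun _ => by simp) j0
  simp only [mul_one, Finset.prod_const_one] at key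
  rw [key]
  rw [MeasureTheory.integral_Icc_eq_integral_Ioc, ← intervalIntegral.integral_of_le zero_le_one,
    integral_id]
  norm_num

end AuxHelpers
lemma prod_split {n m : ℕ} (p : (Fin m → ℝ) → ℝ) (S : Finset (Fin n))
    (x : Fin n → Fin m → ℝ) (τ : {i : Fin n // i ∉ S} → (Fin m → ℝ)) :
    (∏ i, p (if h : i ∈ S then x i else τ ⟨i, h⟩))
      = (∏ i ∈ S, p (x i)) * ∏ t : {i : Fin n // i ∉ S}, p (τ t) := by
  rw [← Finset.prod_mul_prod_compl S]
  congr 1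
  · exact Finset.prod_congr rfl fun i hi => by rw [dif_pos hi]
  · rw [Finset.prod_subtype Sᶜ (fun i => Finset.mem_compl)
      (fun i => p (if h : i ∈ S then x i else τ ⟨i, h⟩))]
    exact Finset.prod_congr rfl fun t _ => by rw [dif_neg t.prop]

lemma margC_prod (n m : ℕ) (p : (Fin m → ℝ) → ℝ)
    (hpint : ∫ y, p y ∂(volume.restrict (Set.Icc (0:Fin m → ℝ) 1)) = 1)
    (S : Finset (Fin n)) (x : Fin n → Fin m → ℝ) :
    margC n m (fun y => ∏ i, p (y i)) S x = ∏ i ∈ S, p (x i) := by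
  unfold margC
  refine (integral_congr_ae (g := fun τ : {i : Fin n // i ∉ S} → (Fin m → ℝ) =>
      (∏ i ∈ S, p (x i)) * ∏ t : {i : Fin n // i ∉ S}, p (τ t))
    (Filter.Eventually.of_forall fun τ => ?_)).trans ?_
  · exact prod_split p S x τ
  · rw [integral_const_mul,
      integral_pi_prod' (volume.restrict (Set.Icc (0:Fin m → ℝ) 1))
        (fun _ : {i : Fin n // i ∉ S} => p)]
    simp [hpint]

lemma condC_prod (n m : ℕ) (p : (Fin m → ℝ) → ℝ) (f : (Fin n → Fin m → ℝ) → ℝ)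
    (hpint : ∫ y, p y ∂(volume.restrict (Set.Icc (0:Fin m → ℝ) 1)) = 1)
    (hppos : ∀ y, 0 < p y)
    (S : Finset (Fin n)) (x : Fin n → Fin m → ℝ) :
    condC n m (fun y => ∏ i, p (y i)) f S x
      = ∫ τ : {i : Fin n // i ∉ S} → (Fin m → ℝ),
          f (fun i => if h : i ∈ S then x i else τ ⟨i, h⟩) *
            ∏ t : {i : Fin n // i ∉ S}, p (τ t)
          ∂(Measure.pi fun _ : {i : Fin n // i ∉ S} =>
              volume.restrict (Set.Icc (0 : Fin m → ℝ) 1)) := by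
  unfold condC
  rw [margC_prod n m p hpint S x]
  refine integral_congr_ae (Filter.Eventually.of_forall fun τ => ?_)
  have hC : (∏ i ∈ S, p (x i)) ≠ 0 :=
    (Finset.prod_pos fun i _ => hppos (x i)).ne'
  have := prod_split p S x τ
  simp only []
  rw [this, mul_div_assoc]
  congr 1
  rw [mul_comm, div_mul_cancel₀ _ hC]

lemma approx_key {E : Type*} [MeasurableSpace E] {ν : Measure E} [IsProbabilityMeasure ν]
    {ι : Type*} [Fintype ι] [DecidableEq ι] {r : ℕ}
    (F : (ι → E) → ℝ) (hFmeas : AEStronglyMeasurable F (Measure.pi fun _ : ι => ν))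
    {M : ℝ} (hM0 : 0 ≤ M)
    (hFbd : ∀ᵐ τ ∂(Measure.pi fun _ : ι => ν), |F τ| ≤ M)
    (a : Fin (r+1) → ℝ) (v : Fin r → ℝ) (θ : ℝ) (hθ0 : 0 ≤ θ) (hθ1 : θ ≤ 1)
    (hvnn : ∀ i, 0 ≤ v i) (hv1 : ∑ i, v i = 1)
    (hann : ∀ i, 0 ≤ a i) (hasum : ∑ i, a i = 1)
    (hasucc : ∀ i : Fin r, a i.succ = θ * v i)
    {B : ℝ} (hB0 : 0 ≤ B)
    (φ : Fin (r+1) → E → ℝ) (hφmeas : ∀ i, Measurable (φ i))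
    (hφnn : ∀ i y, 0 ≤ φ i y) (hφbd : ∀ i y, φ i y ≤ B)
    (hφint : ∀ i, ∫ y, φ i y ∂ν = 1)
    (pt : Fin r → E) {ε1 : ℝ} (hε1 : 0 ≤ ε1)
    (hclose : ∀ K : ι → Fin r, ∀ᵐ τ ∂(Measure.pi fun _ : ι => ν),
        (∏ t, φ ((K t).succ) (τ t)) ≠ 0 → |F τ - F (fun t => pt (K t))| ≤ ε1)
    (hFptbd : ∀ K : ι → Fin r, |F (fun t => pt (K t))| ≤ M) :
    |(∫ τ : ι → E, F τ * ∏ t, (∑ i, a i * φ i (τ t)) ∂(Measure.pi fun _ : ι => ν))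
        - ∑ K : ι → Fin r, (∏ t, v (K t)) * F (fun t => pt (K t))|
      ≤ ε1 + 2*M*(1 - θ^(Fintype.card ι)) := by
  set μI := Measure.pi fun _ : ι => ν with hμI
  have hFint : Integrable F μI := integrable_of_bdd hFmeas hFbd
  have hΦmeas : ∀ J : ι → Fin (r+1), Measurable fun τ : ι → E => ∏ t, φ (J t) (τ t) :=
    fun J => Finset.measurable_prod _ fun t _ => (hφmeas _).comp (measurable_pi_apply t)
  have hΦnn : ∀ (J : ι → Fin (r+1)) (τ : ι → E), 0 ≤ ∏ t, φ (J t) (τ t) :=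
    fun J τ => Finset.prod_nonneg fun t _ => hφnn _ _
  have hΦbd : ∀ (J : ι → Fin (r+1)) (τ : ι → E), (∏ t, φ (J t) (τ t)) ≤ B ^ (Fintype.card ι) := by
    intro J τ
    calc ∏ t, φ (J t) (τ t) ≤ ∏ _t : ι, B :=
          Finset.prod_le_prod (fun t _ => hφnn _ _) (fun t _ => hφbd _ _)
      _ = B ^ (Fintype.card ι) := by rw [Finset.prod_const, Finset.card_univ]
  have hΦintg : ∀ J : ι → Fin (r+1), Integrable (fun τ => ∏ t, φ (J t) (τ t)) μI := fun J =>
    integrable_of_bdd (hΦmeas J).aestronglyMeasurable (Filter.Eventually.of_forall fun τ => by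
      rw [abs_of_nonneg (hΦnn J τ)]; exact hΦbd J τ)
  have hΦint1 : ∀ J : ι → Fin (r+1), ∫ τ, ∏ t, φ (J t) (τ t) ∂μI = 1 := fun J => by
    rw [hμI, integral_pi_prod' ν (fun t => φ (J t))]
    exact Finset.prod_eq_one fun t _ => hφint _
  have hFΦintg : ∀ J : ι → Fin (r+1), Integrable (fun τ => F τ * ∏ t, φ (J t) (τ t)) μI :=
    fun J => integrable_of_bdd (hFmeas.mul (hΦmeas J).aestronglyMeasurable)
      (by filter_upwards [hFbd] with τ hτ
          rw [abs_mul, abs_of_nonneg (hΦnn J τ)]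
          exact mul_le_mul hτ (hΦbd J τ) (hΦnn J τ) hM0)
  set A : (ι → Fin (r+1)) → ℝ := fun J => ∏ t, a (J t) with hA
  set I : (ι → Fin (r+1)) → ℝ := fun J => ∫ τ, F τ * ∏ t, φ (J t) (τ t) ∂μI with hI
  have hexp : (fun τ : ι → E => F τ * ∏ t, (∑ i, a i * φ i (τ t)))
      = fun τ => ∑ J : ι → Fin (r+1), A J * (F τ * ∏ t, φ (J t) (τ t)) := by
    funext τ
    rw [Finset.prod_univ_sum, Fintype.piFinset_univ, Finset.mul_sum]
    exact Finset.sum_congr rfl fun J _ => by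
      rw [Finset.prod_mul_distrib, hA]; ring
  have hIsum : ∫ τ, F τ * ∏ t, (∑ i, a i * φ i (τ t)) ∂μI
      = ∑ J : ι → Fin (r+1), A J * I J := by
    rw [congrArg (fun g => ∫ τ, g τ ∂μI) hexp]
    rw [integral_finset_sum _ (fun J _ => ((hFΦintg J).const_mul _))]
    exact Finset.sum_congr rfl fun J _ => integral_const_mul _ _
  have hIbd : ∀ J, |I J| ≤ M := by
    intro J
    simp only [hI]
    have h1 := norm_integral_le_integral_norm (μ := μI) (fun τ => F τ * ∏ t, φ (J t) (τ t))
    simp only [Real.norm_eq_abs] at h1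
    have h2 : ∫ τ, |F τ * ∏ t, φ (J t) (τ t)| ∂μI ≤ ∫ τ, M * ∏ t, φ (J t) (τ t) ∂μI := by
      refine integral_mono_ae (hFΦintg J).abs ((hΦintg J).const_mul M) ?_
      filter_upwards [hFbd] with τ hτ
      rw [abs_mul, abs_of_nonneg (hΦnn J τ)]
      exact mul_le_mul_of_nonneg_right hτ (hΦnn J τ)
    have h3 : ∫ τ, M * ∏ t, φ (J t) (τ t) ∂μI = M := by
      rw [integral_const_mul, hΦint1 J, mul_one]
    linarith
  have hIclose : ∀ K : ι → Fin r,
      |I (fun t => (K t).succ) - F (fun t => pt (K t))| ≤ ε1 := by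
    intro K
    have hΦi := hΦint1 (fun t => (K t).succ)
    have hpt : F (fun t => pt (K t))
        = ∫ τ, F (fun t => pt (K t)) * ∏ t, φ ((K t).succ) (τ t) ∂μI := by
      rw [integral_const_mul, hΦi, mul_one]
    have hIK : I (fun t => (K t).succ)
        = ∫ τ, F τ * ∏ t, φ ((K t).succ) (τ t) ∂μI := by
      simp only [hI]
    have hintg1 : Integrable (fun τ => F τ * ∏ t, φ ((K t).succ) (τ t)) μI := hFΦintg _
    have hintg2 : Integrable (fun τ => F (fun t => pt (K t)) * ∏ t, φ ((K t).succ) (τ t)) μI :=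
      (hΦintg (fun t => (K t).succ)).const_mul _
    rw [hIK, hpt, ← integral_sub hintg1 hintg2]
    have h1 : |∫ τ, (F τ * ∏ t, φ ((K t).succ) (τ t)
          - F (fun t => pt (K t)) * ∏ t, φ ((K t).succ) (τ t)) ∂μI|
        ≤ ∫ τ, |F τ * ∏ t, φ ((K t).succ) (τ t)
          - F (fun t => pt (K t)) * ∏ t, φ ((K t).succ) (τ t)| ∂μI := by
      simpa [Real.norm_eq_abs] using norm_integral_le_integral_norm (μ := μI)
        (fun τ => F τ * ∏ t, φ ((K t).succ) (τ t)
          - F (fun t => pt (K t)) * ∏ t, φ ((K t).succ) (τ t))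
    have h2 : ∫ τ, |F τ * ∏ t, φ ((K t).succ) (τ t)
          - F (fun t => pt (K t)) * ∏ t, φ ((K t).succ) (τ t)| ∂μI
        ≤ ∫ τ, ε1 * ∏ t, φ ((K t).succ) (τ t) ∂μI := by
      refine integral_mono_ae (hintg1.sub hintg2).abs ((hΦintg _).const_mul ε1) ?_
      filter_upwards [hclose K] with τ hτ
      by_cases hΦ0 : (∏ t, φ ((K t).succ) (τ t)) = 0
      · simp [hΦ0]
      · have : F τ * ∏ t, φ ((K t).succ) (τ t)
            - F (fun t => pt (K t)) * ∏ t, φ ((K t).succ) (τ t)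
            = (F τ - F (fun t => pt (K t))) * ∏ t, φ ((K t).succ) (τ t) := by ring
        rw [this, abs_mul, abs_of_nonneg (hΦnn (fun t => (K t).succ) τ)]
        exact mul_le_mul_of_nonneg_right (hτ hΦ0) (hΦnn (fun t => (K t).succ) τ)
    have h3 : ∫ τ, ε1 * ∏ t, φ ((K t).succ) (τ t) ∂μI = ε1 := by
      rw [integral_const_mul, hΦi, mul_one]
    linarith
  -- sum splitting
  classical
  set Im : Finset (ι → Fin (r+1)) :=
    Finset.univ.image (fun K : ι → Fin r => fun t => (K t).succ) with hIm
  have hsum_im : ∀ g : (ι → Fin (r+1)) → ℝ,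
      ∑ J ∈ Im, g J = ∑ K : ι → Fin r, g (fun t => (K t).succ) := fun g =>
    Finset.sum_image (fun K _ K' _ h =>
      funext fun t => Fin.succ_injective _ (congrFun h t))
  have hsplit : ∀ g : (ι → Fin (r+1)) → ℝ,
      ∑ J : ι → Fin (r+1), g J
        = (∑ K : ι → Fin r, g (fun t => (K t).succ)) + ∑ J ∈ Finset.univ \ Im, g J := by
    intro g
    rw [← hsum_im g, ← Finset.sum_sdiff (Finset.subset_univ Im)]
    exact add_comm _ _
  have hwsum : ∑ K : ι → Fin r, ∏ t, v (K t) = 1 := by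
    rw [← Fintype.piFinset_univ, ← Finset.prod_univ_sum]
    simp [hv1]
  have hAsum : ∑ J : ι → Fin (r+1), A J = 1 := by
    simp only [hA]
    rw [← Fintype.piFinset_univ, ← Finset.prod_univ_sum]
    simp [hasum]
  have hAsucc : ∀ K : ι → Fin r,
      A (fun t => (K t).succ) = θ^(Fintype.card ι) * ∏ t, v (K t) := by
    intro K
    simp only [hA]
    calc (∏ t, a ((K t).succ)) = ∏ t, (θ * v (K t)) :=
          Finset.prod_congr rfl fun t _ => by rw [hasucc]
      _ = θ^(Fintype.card ι) * ∏ t, v (K t) := by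
          rw [Finset.prod_mul_distrib, Finset.prod_const, Finset.card_univ]
  have hAnn : ∀ J, 0 ≤ A J := fun J => Finset.prod_nonneg fun t _ => hann _
  have hAim : ∑ K : ι → Fin r, A (fun t => (K t).succ) = θ^(Fintype.card ι) := by
    rw [Finset.sum_congr rfl fun K _ => hAsucc K, ← Finset.mul_sum, hwsum, mul_one]
  have hAout : ∑ J ∈ Finset.univ \ Im, A J = 1 - θ^(Fintype.card ι) := by
    have := hsplit A
    rw [hAsum, hAim] at this
    linarith
  set TS := ∑ K : ι → Fin r, (∏ t, v (K t)) * F (fun t => pt (K t)) with hTS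
  have hvKnn : ∀ K : ι → Fin r, 0 ≤ ∏ t, v (K t) :=
    fun K => Finset.prod_nonneg fun t _ => hvnn _
  have hTSbd : |TS| ≤ M := by
    calc |TS| ≤ ∑ K : ι → Fin r, |(∏ t, v (K t)) * F (fun t => pt (K t))| := by
          rw [hTS]; exact Finset.abs_sum_le_sum_abs _ _
      _ ≤ ∑ K : ι → Fin r, (∏ t, v (K t)) * M := Finset.sum_le_sum fun K _ => by
          rw [abs_mul, abs_of_nonneg (hvKnn K)]
          exact mul_le_mul_of_nonneg_left (hFptbd K) (hvKnn K)
      _ = M := by rw [← Finset.sum_mul, hwsum, one_mul]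
  have hX : |∑ J ∈ Finset.univ \ Im, A J * I J| ≤ M * (1 - θ^(Fintype.card ι)) := by
    calc |∑ J ∈ Finset.univ \ Im, A J * I J| ≤ ∑ J ∈ Finset.univ \ Im, |A J * I J| :=
          Finset.abs_sum_le_sum_abs _ _
      _ ≤ ∑ J ∈ Finset.univ \ Im, A J * M := Finset.sum_le_sum fun J _ => by
          rw [abs_mul, abs_of_nonneg (hAnn J)]
          exact mul_le_mul_of_nonneg_left (hIbd J) (hAnn J)
      _ = (∑ J ∈ Finset.univ \ Im, A J) * M := by rw [Finset.sum_mul]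
      _ = M * (1 - θ^(Fintype.card ι)) := by rw [hAout]; ring
  have hY : |∑ K : ι → Fin r, (∏ t, v (K t)) * (I (fun t => (K t).succ)
        - F (fun t => pt (K t)))| ≤ ε1 := by
    calc |∑ K : ι → Fin r, (∏ t, v (K t)) * (I (fun t => (K t).succ) - F (fun t => pt (K t)))|
        ≤ ∑ K : ι → Fin r, |(∏ t, v (K t)) * (I (fun t => (K t).succ) - F (fun t => pt (K t)))| :=
          Finset.abs_sum_le_sum_abs _ _
      _ ≤ ∑ K : ι → Fin r, (∏ t, v (K t)) * ε1 := Finset.sum_le_sum fun K _ => by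
          rw [abs_mul, abs_of_nonneg (hvKnn K)]
          exact mul_le_mul_of_nonneg_left (hIclose K) (hvKnn K)
      _ = ε1 := by rw [← Finset.sum_mul, hwsum, one_mul]
  have hID : (∫ τ, F τ * ∏ t, (∑ i, a i * φ i (τ t)) ∂μI) - TS
      = (∑ J ∈ Finset.univ \ Im, A J * I J)
        + θ^(Fintype.card ι) * (∑ K : ι → Fin r, (∏ t, v (K t)) * (I (fun t => (K t).succ)
            - F (fun t => pt (K t))))
        + (θ^(Fintype.card ι) - 1) * TS := by
    rw [hIsum, hsplit (fun J => A J * I J)]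
    have e1 : ∑ K : ι → Fin r, A (fun t => (K t).succ) * I (fun t => (K t).succ)
        = θ^(Fintype.card ι) * ∑ K : ι → Fin r, (∏ t, v (K t)) * I (fun t => (K t).succ) := by
      rw [Finset.mul_sum]
      exact Finset.sum_congr rfl fun K _ => by rw [hAsucc K]; ring
    have e2 : ∑ K : ι → Fin r, (∏ t, v (K t)) * (I (fun t => (K t).succ)
          - F (fun t => pt (K t)))
        = (∑ K : ι → Fin r, (∏ t, v (K t)) * I (fun t => (K t).succ)) - TS := by
      calc ∑ K : ι → Fin r, (∏ t, v (K t)) * (I (fun t => (K t).succ) - F (fun t => pt (K t)))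
          = ∑ K : ι → Fin r, ((∏ t, v (K t)) * I (fun t => (K t).succ)
              - (∏ t, v (K t)) * F (fun t => pt (K t))) :=
            Finset.sum_congr rfl fun K _ => by ring
        _ = (∑ K : ι → Fin r, (∏ t, v (K t)) * I (fun t => (K t).succ))
              - ∑ K : ι → Fin r, (∏ t, v (K t)) * F (fun t => pt (K t)) :=
            Finset.sum_sub_distrib _ _
        _ = _ := by rw [← hTS]
    rw [e1, e2]
    ring
  have hθN0 : 0 ≤ θ^(Fintype.card ι) := pow_nonneg hθ0 _
  have hθN1 : θ^(Fintype.card ι) ≤ 1 := pow_le_one₀ hθ0 hθ1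
  calc |(∫ τ, F τ * ∏ t, (∑ i, a i * φ i (τ t)) ∂μI) - TS|
      = |(∑ J ∈ Finset.univ \ Im, A J * I J)
        + θ^(Fintype.card ι) * (∑ K : ι → Fin r, (∏ t, v (K t)) * (I (fun t => (K t).succ)
            - F (fun t => pt (K t))))
        + (θ^(Fintype.card ι) - 1) * TS| := by rw [hID]
    _ ≤ |∑ J ∈ Finset.univ \ Im, A J * I J|
        + |θ^(Fintype.card ι) * (∑ K : ι → Fin r, (∏ t, v (K t)) * (I (fun t => (K t).succ)
            - F (fun t => pt (K t))))|
        + |(θ^(Fintype.card ι) - 1) * TS| := abs_add_three _ _ _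
    _ ≤ M * (1 - θ^(Fintype.card ι)) + θ^(Fintype.card ι) * ε1
        + (1 - θ^(Fintype.card ι)) * M := by
        have hm1 : |θ^(Fintype.card ι) * (∑ K : ι → Fin r, (∏ t, v (K t))
              * (I (fun t => (K t).succ) - F (fun t => pt (K t))))|
            ≤ θ^(Fintype.card ι) * ε1 := by
          rw [abs_mul, abs_of_nonneg hθN0]
          exact mul_le_mul_of_nonneg_left hY hθN0
        have hm2 : |(θ^(Fintype.card ι) - 1) * TS| ≤ (1 - θ^(Fintype.card ι)) * M := by
          rw [abs_mul]
          have : |θ^(Fintype.card ι) - 1| = 1 - θ^(Fintype.card ι) := by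
            rw [abs_of_nonpos (by linarith)]; ring
          rw [this]
          exact mul_le_mul_of_nonneg_left hTSbd (by linarith)
        linarith [hX]
    _ ≤ ε1 + 2*M*(1 - θ^(Fintype.card ι)) := by nlinarith

set_option maxHeartbeats 1000000 in
/-- n-fold approximation: for a finitely supported probability
measure `q` on `Ω = [0,1]^m` (atoms `x^1,…,x^r`, weights `w_i`) with barycenter
`b ∈ (0,1)^m` and a continuous nonnegative `f : Ω^n → ℝ`, for every `ε > 0` and
`0 ≤ k ≤ n` there is an `(L,b)`-stable positive-a.e. density `P` on `Ω^n` with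
`|E_P(f | L^1,…,L^k)(ω^1,…,ω^k) − E_{q^{⊗(n−k)}}(f(ω^1,…,ω^k,·))| < ε` for all
`(ω^1,…,ω^k)` in the cube. -/
theorem n_fold_approximation
    (n m r : ℕ) (b : Fin m → ℝ) (hb : ∀ j, b j ∈ Set.Ioo (0 : ℝ) 1)
    (xq : Fin r → Fin m → ℝ) (hxq : ∀ i, xq i ∈ Set.Icc (0 : Fin m → ℝ) 1)
    (hxqinj : Function.Injective xq)
    (w : Fin r → ℝ) (hw : ∀ i, 0 < w i) (hw1 : ∑ i, w i = 1)
    (hbar : ∀ j, ∑ i, w i * xq i j = b j)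
    (f : (Fin n → Fin m → ℝ) → ℝ)
    (hcont : Continuous f)
    (hnonneg : ∀ y, 0 ≤ f y)
    (ε : ℝ) (hε : 0 < ε) :
    ∀ k : ℕ, k ≤ n →
      ∃ P : (Fin n → Fin m → ℝ) → ℝ,
        Measurable P ∧
        (∀ᵐ y ∂(Measure.pi fun _ : Fin n =>
            volume.restrict (Set.Icc (0 : Fin m → ℝ) 1)), 0 < P y) ∧
        (∫ y, P y ∂(Measure.pi fun _ : Fin n =>
            volume.restrict (Set.Icc (0 : Fin m → ℝ) 1))) = 1 ∧
        LbStable n m b P ∧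
        ∀ x : Fin n → Fin m → ℝ, (∀ i, x i ∈ Set.Icc (0 : Fin m → ℝ) 1) →
          |condC n m P f (Finset.univ.filter fun i : Fin n => (i : ℕ) < k) x -
              ∑ J : {i : Fin n // ¬ ((i : ℕ) < k)} → Fin r,
                (∏ t, w (J t)) *
                  f (fun i => if h : (i : ℕ) < k then x i else xq (J ⟨i, h⟩))| < ε := by
  intro k hk
  -- bound on f over the cube
  have hcube : IsCompact (Set.Icc (0 : Fin n → Fin m → ℝ) 1) := isCompact_Icc
  obtain ⟨M, hMn⟩ := hcube.exists_bound_of_continuousOn hcont.continuousOn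
  have h01 : (0 : Fin n → Fin m → ℝ) ≤ 1 := by
    intro i; intro j; exact zero_le_one
  have hM0 : 0 ≤ M := le_trans (norm_nonneg _) (hMn 0 ⟨le_rfl, h01⟩)
  have hMabs : ∀ y ∈ Set.Icc (0 : Fin n → Fin m → ℝ) 1, |f y| ≤ M := fun y hy => by
    simpa [Real.norm_eq_abs] using hMn y hy
  -- uniform continuity on the cube
  have huc := hcube.uniformContinuousOn_of_continuous hcont.continuousOn
  rw [Metric.uniformContinuousOn_iff] at huc
  obtain ⟨δ₀, hδ₀pos, hδ₀⟩ := huc (ε/2) (by linarith)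
  -- margin ρ
  obtain ⟨ρ, hρ0, hρ1, hρb⟩ : ∃ ρ : ℝ, 0 < ρ ∧ ρ ≤ 1 ∧ ∀ j, ρ ≤ b j ∧ b j ≤ 1 - ρ := by
    rcases isEmpty_or_nonempty (Fin m) with hm | hm
    · exact ⟨1, one_pos, le_rfl, fun j => isEmptyElim j⟩
    · obtain ⟨j0, -, hj0⟩ := Finset.exists_min_image Finset.univ
        (fun j => min (b j) (1 - b j)) ⟨hm.some, Finset.mem_univ _⟩
      refine ⟨min (min (b j0) (1 - b j0)) 1, ?_, min_le_right _ _, fun j => ⟨?_, ?_⟩⟩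
      · exact lt_min (lt_min (hb j0).1 (by linarith [(hb j0).2])) one_pos
      · calc min (min (b j0) (1 - b j0)) 1 ≤ min (b j0) (1 - b j0) := min_le_left _ _
          _ ≤ min (b j) (1 - b j) := hj0 j (Finset.mem_univ j)
          _ ≤ b j := min_le_left _ _
      · have h1 : min (min (b j0) (1 - b j0)) 1 ≤ 1 - b j :=
          le_trans (min_le_left _ _) (le_trans (hj0 j (Finset.mem_univ j)) (min_le_right _ _))
        linarith
  -- parameters
  set t : ℝ := min (1/2) (δ₀/4) with ht_def
  have ht0 : 0 < t := lt_min (by norm_num) (by linarith)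
  have ht2 : t ≤ 1/2 := min_le_left _ _
  have htδ : t ≤ δ₀/4 := min_le_right _ _
  set δ : ℝ := t * ρ / 4 with hδ_def
  have hδpos : 0 < δ := by positivity
  have hMn1 : (0:ℝ) < 2*M*n+1 := by positivity
  set s : ℝ := min (1/2) (min (t*ρ/2) (ε/(2*(2*M*n+1)))) with hs_def
  have hs0 : 0 < s := lt_min (by norm_num) (lt_min (by positivity) (by positivity))
  have hs12 : s ≤ 1/2 := min_le_left _ _
  have hstρ : s ≤ t*ρ/2 := le_trans (min_le_right _ _) (min_le_left _ _)
  have hsε : s ≤ ε/(2*(2*M*n+1)) := le_trans (min_le_right _ _) (min_le_right _ _)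
  set d : Fin m → ℝ := fun j => b j + s*(b j - 1/2)/((1-s)*t) with hd_def
  have hden : 0 < (1-s)*t := by nlinarith
  have hd : ∀ j, ρ/2 ≤ d j ∧ d j ≤ 1 - ρ/2 := by
    intro j
    have hbj := hρb j
    have h1 : s*(b j - 1/2)/((1-s)*t) ≤ ρ/2 := by
      rw [div_le_iff₀ hden]; nlinarith
    have h2 : -(ρ/2) ≤ s*(b j - 1/2)/((1-s)*t) := by
      rw [le_div_iff₀ hden]; nlinarith
    constructor
    · simp only [hd_def]; linarith
    · simp only [hd_def]; linarith
  have hdsolve : ∀ j, (1-s)*((1-t)*b j + t*d j) + s*(1/2) = b j := by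
    intro j
    simp only [hd_def]
    have h1s : (1:ℝ) - s ≠ 0 := by linarith
    field_simp
    ring
  set c : Fin r → Fin m → ℝ := fun i j => (1-t)*xq i j + t * d j with hc_def
  clear_value t δ s d c
  have hxq' : ∀ i j, 0 ≤ xq i j ∧ xq i j ≤ 1 := fun i j => ⟨(hxq i).1 j, (hxq i).2 j⟩
  have hcin : ∀ i, ∀ j, 0 ≤ c i j - δ ∧ c i j + δ ≤ 1 := by
    intro i j
    have h1 := hxq' i j
    have h2 := hd j
    constructor
    · simp only [hc_def, hδ_def]; nlinarith
    · simp only [hc_def, hδ_def]; nlinarith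
  have hcx : ∀ i j, |c i j - xq i j| ≤ t := by
    intro i j
    have h1 := hxq' i j
    have h2 := hd j
    have h3 : d j - xq i j ≤ 1 := by linarith [h2.2, h1.1]
    have h4 : -1 ≤ d j - xq i j := by linarith [h2.1, h1.2]
    have h5 := mul_le_mul_of_nonneg_left h3 ht0.le
    have h6 := mul_le_mul_of_nonneg_left h4 ht0.le
    rw [abs_le]
    constructor
    · simp only [hc_def]; nlinarith
    · simp only [hc_def]; nlinarith
  -- the mixture density p
  set B : ℝ := max 1 ((2*δ)⁻¹ ^ m) with hB_def
  have hB1 : (1:ℝ) ≤ B := le_max_left _ _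
  clear_value B
  have hB0 : (0:ℝ) ≤ B := by linarith
  set φ : Fin (r+1) → (Fin m → ℝ) → ℝ :=
    fun i => Fin.cases (fun _ => 1) (fun i' => bumpP m δ (c i')) i with hφ_def
  set a : Fin (r+1) → ℝ := fun i => Fin.cases s (fun i' => (1-s)*w i') i with ha_def
  have ha0 : a 0 = s := rfl
  have hasucc : ∀ i : Fin r, a i.succ = (1-s) * w i := fun i => by
    simp only [ha_def, Fin.cases_succ]
  have hφ0 : φ 0 = fun _ => 1 := rfl
  have hφsucc : ∀ i : Fin r, φ i.succ = bumpP m δ (c i) := fun i => by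
    simp only [hφ_def, Fin.cases_succ]
  clear_value φ a
  have hφmeas : ∀ i, Measurable (φ i) := by
    refine Fin.cases ?_ ?_
    · rw [hφ0]; exact measurable_const
    · intro i'; rw [hφsucc]; exact bumpP_meas m δ (c i')
  have hφnn : ∀ i y, 0 ≤ φ i y := by
    refine Fin.cases ?_ ?_
    · intro y; rw [hφ0]; norm_num
    · intro i' y; rw [hφsucc]; exact bumpP_nonneg hδpos _ _
  have hφbd : ∀ i y, φ i y ≤ B := by
    refine Fin.cases ?_ ?_
    · intro y; rw [hφ0]; exact hB1
    · intro i' y; rw [hφsucc, hB_def]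
      exact le_trans (bumpP_le hδpos _ _) (le_max_right _ _)
  have hφint : ∀ i, ∫ y, φ i y ∂(volume.restrict (Set.Icc (0 : Fin m → ℝ) 1)) = 1 := by
    refine Fin.cases ?_ ?_
    · rw [hφ0]; simp
    · intro i'; rw [hφsucc]; exact bumpP_int hδpos (hcin i')
  set cc : Fin (r+1) → Fin m → ℝ := fun i => Fin.cases (fun _ => (1:ℝ)/2) c i with hcc_def
  have hcc0 : cc 0 = fun _ => (1:ℝ)/2 := rfl
  have hccsucc : ∀ i : Fin r, cc i.succ = c i := fun i => by
    simp only [hcc_def, Fin.cases_succ]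
  clear_value cc
  have hφmom : ∀ i j, ∫ y, y j * φ i y ∂(volume.restrict (Set.Icc (0 : Fin m → ℝ) 1))
      = cc i j := by
    refine Fin.cases ?_ ?_
    · intro j
      rw [hφ0, hcc0]
      simp only [mul_one]
      exact eval_int_nu m j
    · intro i' j
      rw [hφsucc, hccsucc]
      exact moment_nu hδpos (hcin i') j
  set p : (Fin m → ℝ) → ℝ := fun y => ∑ i, a i * φ i y with hp_def
  clear_value p
  have hann : ∀ i, 0 ≤ a i := by
    refine Fin.cases ?_ ?_
    · rw [ha0]; exact hs0.le
    · intro i'; rw [hasucc]; exact mul_nonneg (by linarith) (hw i').le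
  have hasum : ∑ i, a i = 1 := by
    rw [Fin.sum_univ_succ]
    simp only [ha_def, Fin.cases_zero, Fin.cases_succ]
    rw [← Finset.mul_sum, hw1]
    ring
  have hpmeas : Measurable p := by
    rw [hp_def]
    exact Finset.measurable_sum _ fun i _ => (hφmeas i).const_mul (a i)
  have hps : ∀ y, s ≤ p y := by
    intro y
    have hsum : p y = a 0 * φ 0 y + ∑ i : Fin r, a i.succ * φ i.succ y := by
      rw [hp_def]; exact Fin.sum_univ_succ _
    have h0 : a 0 * φ 0 y = s := by rw [ha0, hφ0]; ring
    have hrest : 0 ≤ ∑ i : Fin r, a i.succ * φ i.succ y :=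
      Finset.sum_nonneg fun i _ => mul_nonneg (hann _) (hφnn _ _)
    rw [hsum, h0]; linarith
  have hppos : ∀ y, 0 < p y := fun y => lt_of_lt_of_le hs0 (hps y)
  have hpbd : ∀ y, p y ≤ B := by
    intro y
    calc p y ≤ ∑ i, a i * B := by
          rw [hp_def]
          exact Finset.sum_le_sum fun i _ =>
            mul_le_mul_of_nonneg_left (hφbd i y) (hann i)
      _ = B := by rw [← Finset.sum_mul, hasum, one_mul]
  have hφintg : ∀ i, Integrable (φ i) (volume.restrict (Set.Icc (0 : Fin m → ℝ) 1)) :=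
    fun i => integrable_of_bdd (hφmeas i).aestronglyMeasurable
      (Filter.Eventually.of_forall fun y => by
        rw [abs_of_nonneg (hφnn i y)]; exact hφbd i y)
  have hpint : ∫ y, p y ∂(volume.restrict (Set.Icc (0 : Fin m → ℝ) 1)) = 1 := by
    rw [hp_def]
    rw [integral_finset_sum _ (fun i _ => (hφintg i).const_mul (a i))]
    simp only [integral_const_mul, hφint, mul_one]
    exact hasum
  have haey : ∀ᵐ y ∂(volume.restrict (Set.Icc (0 : Fin m → ℝ) 1)),
      y ∈ Set.Icc (0 : Fin m → ℝ) 1 := ae_restrict_mem measurableSet_Icc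
  have hyφintg : ∀ i j, Integrable (fun y => y j * φ i y)
      (volume.restrict (Set.Icc (0 : Fin m → ℝ) 1)) := by
    intro i j
    refine integrable_of_bdd ((measurable_pi_apply j).mul (hφmeas i)).aestronglyMeasurable
      (C := B) ?_
    filter_upwards [haey] with y hy
    have hy0 : (0:ℝ) ≤ y j := by simpa using hy.1 j
    have hy1 : y j ≤ 1 := by simpa using hy.2 j
    have hyj : |y j| ≤ 1 := abs_le.mpr ⟨by linarith, hy1⟩
    calc |y j * φ i y| = |y j| * |φ i y| := abs_mul _ _
      _ ≤ 1 * B := by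
          refine mul_le_mul hyj ?_ (abs_nonneg _) zero_le_one
          rw [abs_of_nonneg (hφnn i y)]; exact hφbd i y
      _ = B := one_mul B
  have hpmom : ∀ j, ∫ y, y j * p y ∂(volume.restrict (Set.Icc (0 : Fin m → ℝ) 1)) = b j := by
    intro j
    have hfun : (fun y : Fin m → ℝ => y j * p y)
        = fun y => ∑ i, a i * (y j * φ i y) := by
      funext y
      rw [hp_def, Finset.mul_sum]
      exact Finset.sum_congr rfl fun i _ => by ring
    rw [hfun, integral_finset_sum _ (fun i _ => (hyφintg i j).const_mul (a i))]
    simp only [integral_const_mul, hφmom]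
    -- ∑ i, a i * cc i j = b j
    rw [Fin.sum_univ_succ]
    simp only [ha_def, hcc_def, Fin.cases_zero, Fin.cases_succ]
    have hsumc : ∑ i : Fin r, (1-s) * w i * c i j = (1-s) * ((1-t) * b j + t * d j) := by
      have h1 : ∑ i : Fin r, w i * c i j = (1-t) * b j + t * d j := by
        have h2 : ∀ i : Fin r, w i * c i j = (1-t) * (w i * xq i j) + (t * d j) * w i :=
          fun i => by simp only [hc_def]; ring
        rw [Finset.sum_congr rfl fun i _ => h2 i, Finset.sum_add_distrib,
          ← Finset.mul_sum, ← Finset.mul_sum, hbar j, hw1]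
        ring
      calc ∑ i : Fin r, (1-s) * w i * c i j = (1-s) * ∑ i : Fin r, w i * c i j := by
            rw [Finset.mul_sum]
            exact Finset.sum_congr rfl fun i _ => by ring
        _ = (1-s) * ((1-t) * b j + t * d j) := by rw [h1]
    rw [hsumc]
    have := hdsolve j
    linarith
  -- the candidate density
  refine ⟨fun y => ∏ i, p (y i), ?_, ?_, ?_, ?_, ?_⟩
  · exact Finset.measurable_prod _ fun i _ => hpmeas.comp (measurable_pi_apply i)
  · exact Filter.Eventually.of_forall fun y => Finset.prod_pos fun i _ => hppos _
  · rw [integral_pi_prod' (volume.restrict (Set.Icc (0 : Fin m → ℝ) 1)) (fun _ : Fin n => p)]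
    simp [hpint]
  · -- stability
    intro k'
    refine Filter.Eventually.of_forall fun x => fun j => ?_
    rw [condC_prod n m p (fun y => y k' j) hpint hppos (Finset.Iio k') x]
    have hk' : (k' : Fin n) ∉ Finset.Iio k' := by simp
    have key := integral_eval_mul_prod (volume.restrict (Set.Icc (0 : Fin m → ℝ) 1))
      (fun u : Fin m → ℝ => u j) (fun _ : {i : Fin n // i ∉ Finset.Iio k'} => p)
      (fun _ => hpint) ⟨k', hk'⟩
    rw [← hpmom j, ← key]
    refine integral_congr_ae (Filter.Eventually.of_forall fun τ => ?_)
    simp only [dif_neg hk']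
  · -- main estimate
    intro x hx
    set S : Finset (Fin n) := Finset.univ.filter (fun i : Fin n => (i : ℕ) < k) with hS_def
    rw [condC_prod n m p f hpint hppos S x]
    have hiff : ∀ i : Fin n, i ∉ S ↔ ¬ ((i : ℕ) < k) := fun i => by
      simp [hS_def]
    -- reindex the target sum
    have hTS_eq : (∑ J : {i : Fin n // ¬ ((i : ℕ) < k)} → Fin r,
          (∏ t, w (J t)) * f (fun i => if h : (i : ℕ) < k then x i else xq (J ⟨i, h⟩)))
        = ∑ K : {i : Fin n // i ∉ S} → Fin r,
            (∏ t, w (K t)) * f (fun i => if h : i ∈ S then x i else xq (K ⟨i, h⟩)) := by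
      refine (Fintype.sum_equiv
        (Equiv.arrowCongr (Equiv.subtypeEquivRight hiff) (Equiv.refl (Fin r)))
        _ _ fun K => ?_).symm
      congr 1
      · refine Fintype.prod_equiv (Equiv.subtypeEquivRight hiff) _ _ fun t => ?_
        congr 1
      · congr 1
        funext i
        by_cases hik : (i : ℕ) < k
        · have hiS : i ∈ S := by simp [hS_def, hik]
          rw [dif_pos hiS, dif_pos hik]
        · have hiS : i ∉ S := (hiff i).mpr hik
          rw [dif_neg hiS, dif_neg hik]
          congr 1
    rw [hTS_eq]
    -- a.e. coordinates in the unit cube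
    have haeT : ∀ᵐ τ ∂(Measure.pi fun _ : {i : Fin n // i ∉ S} =>
        volume.restrict (Set.Icc (0 : Fin m → ℝ) 1)),
        ∀ t, τ t ∈ Set.Icc (0 : Fin m → ℝ) 1 := by
      rw [← pi_restrict_eq (fun _ : {i : Fin n // i ∉ S} => (volume : Measure (Fin m → ℝ)))
        _ (fun _ => measurableSet_Icc)]
      filter_upwards [ae_restrict_mem (MeasurableSet.univ_pi fun _ => measurableSet_Icc)]
        with τ hτ
      exact fun t => hτ t (Set.mem_univ t)
    -- merge stays in the cube
    have hmerge_mem : ∀ τ : {i : Fin n // i ∉ S} → (Fin m → ℝ),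
        (∀ t, τ t ∈ Set.Icc (0 : Fin m → ℝ) 1) →
        (fun i => if h : i ∈ S then x i else τ ⟨i, h⟩) ∈ Set.Icc (0 : Fin n → Fin m → ℝ) 1 := by
      intro τ hτ
      constructor
      · intro i
        by_cases hi : i ∈ S
        · simp only [dif_pos hi]; exact (hx i).1
        · simp only [dif_neg hi]; exact (hτ ⟨i, hi⟩).1
      · intro i
        by_cases hi : i ∈ S
        · simp only [dif_pos hi]; exact (hx i).2
        · simp only [dif_neg hi]; exact (hτ ⟨i, hi⟩).2
    have hmergecont : Continuous (fun τ : {i : Fin n // i ∉ S} → (Fin m → ℝ) =>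
        (fun i => if h : i ∈ S then x i else τ ⟨i, h⟩) : _ → Fin n → Fin m → ℝ) := by
      refine continuous_pi fun i => ?_
      by_cases hi : i ∈ S
      · simp only [dif_pos hi]; exact continuous_const
      · simp only [dif_neg hi]; exact continuous_apply _
    have hFmeas : AEStronglyMeasurable
        (fun τ : {i : Fin n // i ∉ S} → (Fin m → ℝ) =>
          f (fun i => if h : i ∈ S then x i else τ ⟨i, h⟩))
        (Measure.pi fun _ : {i : Fin n // i ∉ S} =>
          volume.restrict (Set.Icc (0 : Fin m → ℝ) 1)) :=
      (hcont.comp hmergecont).aestronglyMeasurable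
    have hFbd : ∀ᵐ τ ∂(Measure.pi fun _ : {i : Fin n // i ∉ S} =>
        volume.restrict (Set.Icc (0 : Fin m → ℝ) 1)),
        |f (fun i => if h : i ∈ S then x i else τ ⟨i, h⟩)| ≤ M := by
      filter_upwards [haeT] with τ hτ
      exact hMabs _ (hmerge_mem τ hτ)
    -- closeness hypothesis
    have hclose : ∀ K : {i : Fin n // i ∉ S} → Fin r,
        ∀ᵐ τ ∂(Measure.pi fun _ : {i : Fin n // i ∉ S} =>
          volume.restrict (Set.Icc (0 : Fin m → ℝ) 1)),
        (∏ t, φ ((K t).succ) (τ t)) ≠ 0 →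
        |f (fun i => if h : i ∈ S then x i else τ ⟨i, h⟩)
          - f (fun i => if h : i ∈ S then x i else xq (K ⟨i, h⟩))| ≤ ε/2 := by
      intro K
      filter_upwards [haeT] with τ hτ hΦ
      have hsupp : ∀ t, ∀ j, |τ t j - c (K t) j| ≤ δ := by
        intro t j
        have hne := Finset.prod_ne_zero_iff.mp hΦ t (Finset.mem_univ t)
        rw [hφsucc] at hne
        exact bumpP_support hne j
      have hdist : dist (fun i => if h : i ∈ S then x i else τ ⟨i, h⟩ : Fin n → Fin m → ℝ)
          (fun i => if h : i ∈ S then x i else xq (K ⟨i, h⟩)) < δ₀ := by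
        rw [dist_pi_lt_iff hδ₀pos]
        intro i
        by_cases hi : i ∈ S
        · simp only [dif_pos hi]; rwa [dist_self]
        · simp only [dif_neg hi]
          rw [dist_pi_lt_iff hδ₀pos]
          intro j
          rw [Real.dist_eq]
          have h1 := hsupp ⟨i, hi⟩ j
          have h2 := hcx (K ⟨i, hi⟩) j
          have h3 := abs_sub_le (τ ⟨i, hi⟩ j) (c (K ⟨i, hi⟩) j) (xq (K ⟨i, hi⟩) j)
          have hδt : δ ≤ t := by simp only [hδ_def]; nlinarith
          calc |τ ⟨i, hi⟩ j - xq (K ⟨i, hi⟩) j| ≤ δ + t := by linarith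
            _ < δ₀ := by linarith
      have hm1 := hmerge_mem τ hτ
      have hm2 : (fun i => if h : i ∈ S then x i else xq (K ⟨i, h⟩))
          ∈ Set.Icc (0 : Fin n → Fin m → ℝ) 1 := hmerge_mem _ (fun t => hxq (K t))
      have := hδ₀ _ hm1 _ hm2 hdist
      rw [Real.dist_eq] at this
      exact this.le
    have hFptbd : ∀ K : {i : Fin n // i ∉ S} → Fin r,
        |f (fun i => if h : i ∈ S then x i else xq (K ⟨i, h⟩))| ≤ M :=
      fun K => hMabs _ (hmerge_mem _ (fun t => hxq (K t)))
    -- apply the key estimate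
    have hkey := approx_key
      (ν := volume.restrict (Set.Icc (0 : Fin m → ℝ) 1))
      (ι := {i : Fin n // i ∉ S}) (r := r)
      (F := fun τ => f (fun i => if h : i ∈ S then x i else τ ⟨i, h⟩))
      hFmeas hM0 hFbd a w (1-s) (by linarith) (by linarith)
      (fun i => (hw i).le) hw1 hann hasum hasucc hB0 φ hφmeas hφnn hφbd hφint
      (pt := xq) (ε1 := ε/2) (by linarith) hclose hFptbd
    simp only [] at hkey
    -- transform the goal integrand to match
    rw [hp_def]
    simp only []
    refine lt_of_le_of_lt hkey ?_
    -- numeric estimate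
    set N := Fintype.card {i : Fin n // i ∉ S} with hN_def
    clear_value N
    have hNn : (N : ℝ) ≤ (n : ℝ) := by
      have h1 : N ≤ Fintype.card (Fin n) := by
        rw [hN_def]; exact Fintype.card_subtype_le _
      rw [Fintype.card_fin] at h1
      exact_mod_cast h1
    have hpow : 1 - (1-s)^N ≤ N * s := by
      have h1 : 1 + (N : ℝ) * (-s) ≤ (1 + (-s))^N := by
        refine one_add_mul_le_pow (by linarith) N
      have h2 : (1 + (-s) : ℝ) = 1 - s := by ring
      rw [h2] at h1
      nlinarith
    have hθN0 : (0:ℝ) ≤ (1-s)^N := pow_nonneg (by linarith) _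
    have hN0 : (0:ℝ) ≤ N := Nat.cast_nonneg _
    have hfin : 2*M*(1 - (1-s)^N) < ε/2 := by
      have h1 : 2*M*(1 - (1-s)^N) ≤ 2*M*((N:ℝ)*s) :=
        mul_le_mul_of_nonneg_left hpow (by linarith : (0:ℝ) ≤ 2*M)
      have h2 : 2*M*((N:ℝ)*s) ≤ 2*M*((n:ℝ)*s) :=
        mul_le_mul_of_nonneg_left (mul_le_mul_of_nonneg_right hNn hs0.le)
          (by linarith : (0:ℝ) ≤ 2*M)
      have h3 : 2*M*((n:ℝ)*s) ≤ 2*M*(n:ℝ)*(ε/(2*(2*M*n+1))) := by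
        have h5 := mul_le_mul_of_nonneg_left hsε
          (show (0:ℝ) ≤ 2*M*(n:ℝ) by positivity)
        nlinarith [h5]
      have h4 : 2*M*(n:ℝ)*(ε/(2*(2*M*n+1))) < ε/2 := by
        have hD : (0:ℝ) < 2*(2*M*n+1) := by positivity
        rw [show 2*M*(n:ℝ)*(ε/(2*(2*M*n+1))) = (2*M*(n:ℝ)*ε)/(2*(2*M*n+1)) from by ring]
        rw [div_lt_iff₀ hD]
        nlinarith
      linarith
    linarith
end

section
/- The European basket payoff F = (Σ_{i=0}^m c_i S_i^n − K)^+ with c_i ≥ 0 for i ≥ 1, K > 0, and S_i^n = S_i^0 Π_{k=1}^n (D_i + (U_i−D_i)L_i^k) (with S_0^n = S_0^0 R^n), is continuous, nonnegative, and fibrewise convex-supermodular as a function Ω^n → ℝ. -/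
/-- The price jump of asset `i` (asset `0` is the bond): `Ψ_0 = R`,
`Ψ_i(ω) = D_i + (U_i − D_i) ω_i` for `1 ≤ i ≤ m`. -/
noncomputable def Psi (m : ℕ) (R : ℝ) (D U : Fin m → ℝ)
    (i : Fin (m + 1)) (ω : Fin m → ℝ) : ℝ :=
  if h : (i : ℕ) = 0 then R
  else D ⟨(i : ℕ) - 1, by have := i.isLt; omega⟩ +
    (U ⟨(i : ℕ) - 1, by have := i.isLt; omega⟩ -
      D ⟨(i : ℕ) - 1, by have := i.isLt; omega⟩) *
      ω ⟨(i : ℕ) - 1, by have := i.isLt; omega⟩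

lemma Psi_zero {m : ℕ} {R : ℝ} {D U : Fin m → ℝ} {i : Fin (m+1)}
    (h : (i : ℕ) = 0) (ω : Fin m → ℝ) : Psi m R D U i ω = R := by
  simp [Psi, h]

lemma Psi_ne {m : ℕ} {R : ℝ} {D U : Fin m → ℝ} {i : Fin (m+1)} {j : Fin m}
    (h : (i : ℕ) = (j : ℕ) + 1) (ω : Fin m → ℝ) :
    Psi m R D U i ω = D j + (U j - D j) * ω j := by
  have h0 : (i : ℕ) ≠ 0 := by omega
  simp only [Psi, dif_neg h0]
  have hj : (⟨(i : ℕ) - 1, by have := i.isLt; omega⟩ : Fin m) = j := by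
    apply Fin.ext; simp [h]
  rw [hj]

lemma Psi_pred {m : ℕ} {i : Fin (m+1)} (h : (i : ℕ) ≠ 0) :
    ∃ j : Fin m, (i : ℕ) = (j : ℕ) + 1 :=
  ⟨⟨(i : ℕ) - 1, by have := i.isLt; omega⟩, by simp; omega⟩

lemma max_ineq {a b M w : ℝ} (h1 : a ≤ M) (h2 : b ≤ M) (h3 : a + b = M + w) :
    max a 0 + max b 0 ≤ max M 0 + max w 0 := by
  simp only [max_def]
  split_ifs <;> linarith

lemma Psi_affine {m : ℕ} {R : ℝ} {D U : Fin m → ℝ} (i : Fin (m+1))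
    {a b : ℝ} (hab : a + b = 1) (u v : Fin m → ℝ) :
    Psi m R D U i (a • u + b • v) = a * Psi m R D U i u + b * Psi m R D U i v := by
  by_cases h : (i : ℕ) = 0
  · simp only [Psi_zero h]; rw [← add_mul, hab, one_mul]
  · obtain ⟨j, hj⟩ := Psi_pred h
    simp only [Psi_ne hj, Pi.add_apply, Pi.smul_apply, smul_eq_mul]
    have hb : b = 1 - a := by linarith
    subst hb; ring

lemma Psi_mono {m : ℕ} {R : ℝ} {D U : Fin m → ℝ} (hUD : ∀ j, D j ≤ U j)
    (i : Fin (m+1)) {u v : Fin m → ℝ} (huv : u ≤ v) :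
    Psi m R D U i u ≤ Psi m R D U i v := by
  by_cases h : (i : ℕ) = 0
  · simp [Psi_zero h]
  · obtain ⟨j, hj⟩ := Psi_pred h
    simp only [Psi_ne hj]
    nlinarith [huv j, sub_nonneg.mpr (hUD j)]

lemma Psi_modular {m : ℕ} {R : ℝ} {D U : Fin m → ℝ} (i : Fin (m+1))
    (u v : Fin m → ℝ) :
    Psi m R D U i u + Psi m R D U i v =
      Psi m R D U i (fun k => max (u k) (v k)) +
        Psi m R D U i (fun k => min (u k) (v k)) := by
  by_cases h : (i : ℕ) = 0
  · simp [Psi_zero h]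
  · obtain ⟨j, hj⟩ := Psi_pred h
    simp only [Psi_ne hj]
    linear_combination (D j - U j) * (max_add_min (u j) (v j))

lemma Psi_pos {m : ℕ} {R : ℝ} {D U : Fin m → ℝ} (hD : ∀ j, 0 < D j)
    (hUD : ∀ j, D j ≤ U j) {i : Fin (m+1)} (h : (i : ℕ) ≠ 0)
    {ω : Fin m → ℝ} (hω : ω ∈ Set.Icc (0 : Fin m → ℝ) 1) :
    0 < Psi m R D U i ω := by
  obtain ⟨j, hj⟩ := Psi_pred h
  rw [Psi_ne hj]
  nlinarith [hD j, mul_nonneg (sub_nonneg.mpr (hUD j)) (hω.1 j)]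

lemma Psi_continuous {m : ℕ} {R : ℝ} {D U : Fin m → ℝ} (i : Fin (m+1)) :
    Continuous (Psi m R D U i) := by
  by_cases h : (i : ℕ) = 0
  · have : Psi m R D U i = fun _ => R := funext (Psi_zero h)
    rw [this]; exact continuous_const
  · obtain ⟨j, hj⟩ := Psi_pred h
    have : Psi m R D U i = fun ω => D j + (U j - D j) * ω j := funext (Psi_ne hj)
    rw [this]
    exact continuous_const.add (continuous_const.mul (continuous_apply j))

/-- the European basket payoff
`F = (Σ_i c_i S_i^n − K)⁺`, with `S_i^n = S_i^0 Π_k Ψ_i(ω^k)`, is continuous,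
nonnegative, and fibrewise convex-supermodular on `Ω^n`. -/
theorem european_basket_fibrewise_convex_supermodular
    (n m : ℕ) (R K : ℝ) (hK : 0 < K) (D U : Fin m → ℝ)
    (hD : ∀ i, 0 < D i) (hDR : ∀ i, D i < R) (hRU : ∀ i, R < U i)
    (S0 : Fin (m + 1) → ℝ) (hS0 : ∀ i, 0 < S0 i)
    (c : Fin (m + 1) → ℝ) (hc : ∀ i : Fin (m + 1), 1 ≤ (i : ℕ) → 0 ≤ c i)
    (F : (Fin n → Fin m → ℝ) → ℝ)
    (hF : ∀ y, F y =
      max (∑ i : Fin (m + 1), c i * (S0 i * ∏ t : Fin n, Psi m R D U i (y t)) - K) 0) :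
    Continuous F ∧
    (∀ y : Fin n → Fin m → ℝ, 0 ≤ F y) ∧
    (∀ (t : Fin n) (x : Fin n → Fin m → ℝ),
      (∀ s, x s ∈ Set.Icc (0 : Fin m → ℝ) 1) →
      ConvexOn ℝ (Set.Icc (0 : Fin m → ℝ) 1) (fun ω => F (Function.update x t ω))) ∧
    (∀ (t : Fin n) (x : Fin n → Fin m → ℝ),
      (∀ s, x s ∈ Set.Icc (0 : Fin m → ℝ) 1) →
      ∀ u v : Fin m → ℝ,
        (∀ i, u i = 0 ∨ u i = 1) → (∀ i, v i = 0 ∨ v i = 1) →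
        F (Function.update x t u) + F (Function.update x t v) ≤
          F (Function.update x t (fun i => max (u i) (v i))) +
            F (Function.update x t (fun i => min (u i) (v i)))) := by
  have hUD : ∀ j, D j ≤ U j := fun j => le_of_lt ((hDR j).trans (hRU j))
  -- the fibrewise rewriting
  have hG : ∀ (t : Fin n) (x : Fin n → Fin m → ℝ) (ω : Fin m → ℝ),
      F (Function.update x t ω) =
      max (∑ i : Fin (m + 1),
        (c i * S0 i * ∏ s ∈ Finset.univ.erase t, Psi m R D U i (x s)) *
          Psi m R D U i ω - K) 0 := by
    intro t x ω
    rw [hF]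
    have hs : ∑ i : Fin (m + 1), c i * (S0 i * ∏ s : Fin n, Psi m R D U i (Function.update x t ω s)) =
        ∑ i : Fin (m + 1),
          (c i * S0 i * ∏ s ∈ Finset.univ.erase t, Psi m R D U i (x s)) *
            Psi m R D U i ω := by
      refine Finset.sum_congr rfl fun i _ => ?_
      have h1 : (fun s : Fin n => Psi m R D U i (Function.update x t ω s)) =
          Function.update (fun s => Psi m R D U i (x s)) t (Psi m R D U i ω) :=
        funext fun s => Function.apply_update (fun _ w => Psi m R D U i w) x t ω s
      have h2 : (∏ s : Fin n, Psi m R D U i (Function.update x t ω s)) =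
          (∏ s : Fin n, Function.update (fun s => Psi m R D U i (x s)) t
            (Psi m R D U i ω) s) := by rw [h1]
      rw [h2, Finset.prod_update_of_mem (Finset.mem_univ t),
        Finset.sdiff_singleton_eq_erase]
      ring
    rw [hs]
  -- positivity of the coefficients
  have hA : ∀ (t : Fin n) (x : Fin n → Fin m → ℝ),
      (∀ s, x s ∈ Set.Icc (0 : Fin m → ℝ) 1) →
      ∀ i : Fin (m + 1), (i : ℕ) ≠ 0 →
      0 ≤ c i * S0 i * ∏ s ∈ Finset.univ.erase t, Psi m R D U i (x s) := by
    intro t x hx i hi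
    have hP : 0 < ∏ s ∈ Finset.univ.erase t, Psi m R D U i (x s) :=
      Finset.prod_pos fun s _ => Psi_pos hD hUD hi (hx s)
    have hci : 0 ≤ c i := hc i (by omega)
    exact mul_nonneg (mul_nonneg hci (hS0 i).le) hP.le
  refine ⟨?_, ?_, ?_, ?_⟩
  · have hFeq : F = fun y => max (∑ i : Fin (m + 1),
        c i * (S0 i * ∏ t : Fin n, Psi m R D U i (y t)) - K) 0 := funext hF
    rw [hFeq]
    refine Continuous.max ?_ continuous_const
    refine Continuous.sub ?_ continuous_const
    refine continuous_finset_sum _ fun i _ => ?_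
    refine continuous_const.mul (continuous_const.mul ?_)
    exact continuous_finset_prod _ fun s _ =>
      (Psi_continuous i).comp (continuous_apply s)
  · intro y; rw [hF]; exact le_max_right _ _
  · -- convexity
    intro t x hx
    refine ⟨convex_Icc _ _, ?_⟩
    intro p hp q hq a b ha hb hab
    simp only [smul_eq_mul]
    rw [hG t x, hG t x, hG t x]
    set A : Fin (m + 1) → ℝ := fun i =>
      c i * S0 i * ∏ s ∈ Finset.univ.erase t, Psi m R D U i (x s) with hAdef
    have hsum : ∑ i : Fin (m + 1), A i * Psi m R D U i (a • p + b • q) - K =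
        a * (∑ i : Fin (m + 1), A i * Psi m R D U i p - K) +
          b * (∑ i : Fin (m + 1), A i * Psi m R D U i q - K) := by
      have h1 : ∑ i : Fin (m + 1), A i * Psi m R D U i (a • p + b • q) =
          ∑ i : Fin (m + 1), (a * (A i * Psi m R D U i p) +
            b * (A i * Psi m R D U i q)) :=
        Finset.sum_congr rfl fun i _ => by rw [Psi_affine i hab]; ring
      rw [h1, Finset.sum_add_distrib, ← Finset.mul_sum, ← Finset.mul_sum]
      have hb' : b = 1 - a := by linarith
      rw [hb']; ring
    rw [hsum]
    refine max_le ?_ ?_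
    · exact add_le_add
        (mul_le_mul_of_nonneg_left (le_max_left _ _) ha)
        (mul_le_mul_of_nonneg_left (le_max_left _ _) hb)
    · have := mul_nonneg ha (le_max_right (∑ i : Fin (m + 1), A i * Psi m R D U i p - K) 0)
      have := mul_nonneg hb (le_max_right (∑ i : Fin (m + 1), A i * Psi m R D U i q - K) 0)
      positivity
  · -- supermodularity
    intro t x hx u v hu hv
    rw [hG t x, hG t x, hG t x, hG t x]
    set A : Fin (m + 1) → ℝ := fun i =>
      c i * S0 i * ∏ s ∈ Finset.univ.erase t, Psi m R D U i (x s) with hAdef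
    have hAnn : ∀ i : Fin (m + 1), (i : ℕ) ≠ 0 → 0 ≤ A i := fun i hi => hA t x hx i hi
    have hmono : ∀ w w' : Fin m → ℝ, w ≤ w' →
        ∑ i : Fin (m + 1), A i * Psi m R D U i w - K ≤
          ∑ i : Fin (m + 1), A i * Psi m R D U i w' - K := by
      intro w w' hw
      have : ∑ i : Fin (m + 1), A i * Psi m R D U i w ≤
          ∑ i : Fin (m + 1), A i * Psi m R D U i w' := by
        refine Finset.sum_le_sum fun i _ => ?_
        by_cases hi : (i : ℕ) = 0
        · rw [Psi_zero hi, Psi_zero hi]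
        · exact mul_le_mul_of_nonneg_left (Psi_mono hUD i hw) (hAnn i hi)
      linarith
    have h1 : ∑ i : Fin (m + 1), A i * Psi m R D U i u - K ≤
        ∑ i : Fin (m + 1), A i * Psi m R D U i (fun k => max (u k) (v k)) - K :=
      hmono u _ fun k => le_max_left _ _
    have h2 : ∑ i : Fin (m + 1), A i * Psi m R D U i v - K ≤
        ∑ i : Fin (m + 1), A i * Psi m R D U i (fun k => max (u k) (v k)) - K :=
      hmono v _ fun k => le_max_right _ _
    have h3 : (∑ i : Fin (m + 1), A i * Psi m R D U i u - K) +
        (∑ i : Fin (m + 1), A i * Psi m R D U i v - K) =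
        (∑ i : Fin (m + 1), A i * Psi m R D U i (fun k => max (u k) (v k)) - K) +
          (∑ i : Fin (m + 1), A i * Psi m R D U i (fun k => min (u k) (v k)) - K) := by
      have : ∑ i : Fin (m + 1), (A i * Psi m R D U i u + A i * Psi m R D U i v) =
          ∑ i : Fin (m + 1), (A i * Psi m R D U i (fun k => max (u k) (v k)) +
            A i * Psi m R D U i (fun k => min (u k) (v k))) :=
        Finset.sum_congr rfl fun i _ => by rw [← mul_add, ← mul_add, Psi_modular]
      rw [Finset.sum_add_distrib, Finset.sum_add_distrib] at this
      linarith
    exact max_ineq h1 h2 h3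
end
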